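/- arXiv:1206.4355 — 9 statements merged into one kernel-verified Lean document; each statement's English description precedes it below -/
import Mathlib

section
/- Let p be a prime. A positive integer n is p-practical if and only if every integer m with 1 ≤ m ≤ n can be written as m = Σ_{d ∣ n} ℓ_p*(d)·n_d, where for each positive divisor d of n, n_d is an integer with 0 ≤ n_d ≤ φ(d)/ℓ_p*(d). -/
/-!
Over `𝔽_p` one has `X^n - 1 = ∏_{d ∣ n} Φ_d` and `Φ_d = Φ_{d_{(p)}} ^ φ(p^{v_p(d)})`.
Every irreducible factor of `Φ_{d_{(p)}}` has degree `ℓ_p*(d)` (its roots are primitive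
`d_{(p)}`-th roots of unity, which generate `𝔽_{p^{ℓ_p*(d)}}`), so counted with multiplicity
`Φ_d` has `φ(d)/ℓ_p*(d)` irreducible factors, all of degree `ℓ_p*(d)`. Monic divisors of `X^n - 1`
are the products of submultisets of its irreducible factors, and such a submultiset amounts to
choosing `n_d ≤ φ(d)/ℓ_p*(d)` of the factors of each `Φ_d`; its degree is `∑ ℓ_p*(d) n_d`.
-/

open scoped Classical

/-- `n` is φ-practical: `X^n - 1` has a divisor in `ℤ[X]` of every degree `1 ≤ m ≤ n`. -/
def PhiPractical (n : ℕ) : Prop :=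
  ∀ m : ℕ, 1 ≤ m → m ≤ n →
    ∃ g : Polynomial ℤ, g ∣ (Polynomial.X ^ n - 1) ∧ g.natDegree = m

/-- `n` is p-practical: `X^n - 1` has a divisor in `𝔽_p[X]` of every degree `1 ≤ m ≤ n`. -/
def PPractical (p n : ℕ) : Prop :=
  ∀ m : ℕ, 1 ≤ m → m ≤ n →
    ∃ g : Polynomial (ZMod p), g ∣ (Polynomial.X ^ n - 1) ∧ g.natDegree = m

/-- `n` is λ-practical: `n` is p-practical for every prime `p`. -/
def LambdaPractical (n : ℕ) : Prop := ∀ p : ℕ, p.Prime → PPractical p n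

/-- `ℓ_p*(d)`: the multiplicative order of `p` modulo the largest divisor of `d`
coprime to `p` (for `p` prime, this largest divisor is `ordCompl[p] d`). -/
noncomputable def lstar (p d : ℕ) : ℕ := orderOf ((p : ZMod (ordCompl[p] d)))

/-- The Carmichael function `λ(d)`: the exponent of `(ℤ/dℤ)ˣ`. -/
noncomputable def carmichael (d : ℕ) : ℕ := Monoid.exponent (ZMod d)ˣ

/-- `n` is weakly φ-practical: writing `n = p₁^{e₁} ⋯ p_k^{e_k}` with `p₁ < ⋯ < p_k`,
each `p_{i+1} ≤ p₁^{e₁} ⋯ p_i^{e_i} + 2`; equivalently, every prime `q ∣ n` satisfies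
`q ≤ (∏_{r ∣ n, r prime, r < q} r^{v_r(n)}) + 2`. -/
def WeaklyPhiPractical (n : ℕ) : Prop :=
  0 < n ∧ ∀ q : ℕ, q.Prime → q ∣ n →
    q ≤ (∏ r ∈ n.primeFactors.filter (· < q), r ^ n.factorization r) + 2

open Polynomial UniqueFactorizationMonoid

namespace Multiset

variable {ι α : Type*}

theorem exists_eq_add_of_le_add {t a b : Multiset α} (h : t ≤ a + b) :
    ∃ ta ≤ a, ∃ tb ≤ b, t = ta + tb :=
  ⟨t ∩ a, inter_le_right, t - a, tsub_le_iff_left.mpr h, by rw [add_comm, sub_add_inter]⟩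

theorem exists_eq_sum_of_le_sum {s : Finset ι} {M : ι → Multiset α} {t : Multiset α}
    (h : t ≤ ∑ i ∈ s, M i) : ∃ T : ι → Multiset α, (∀ i ∈ s, T i ≤ M i) ∧ t = ∑ i ∈ s, T i := by
  induction s using Finset.induction generalizing t with
  | empty => exact ⟨0, by simp, by simpa using h⟩
  | insert a s ha ih =>
    rw [Finset.sum_insert ha] at h
    obtain ⟨ta, hta, tb, htb, rfl⟩ := exists_eq_add_of_le_add h
    obtain ⟨T, hT, rfl⟩ := ih htb
    have hne : ∀ i ∈ s, i ≠ a := fun i hi => ne_of_mem_of_not_mem hi ha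
    refine ⟨Function.update T a ta, fun i hi => ?_, ?_⟩
    · rcases Finset.mem_insert.mp hi with rfl | hi
      · simpa using hta
      · simpa [hne i hi] using hT i hi
    · rw [Finset.sum_insert ha, Function.update_self,
        Finset.sum_congr rfl fun i hi => Function.update_of_ne (hne i hi) ta T]

theorem exists_le_card_eq {s : Multiset α} {k : ℕ} (hk : k ≤ card s) :
    ∃ t ≤ s, card t = k := by
  obtain ⟨t, ht⟩ := card_pos_iff_exists_mem.mp
    (by rw [card_powersetCard]; exact Nat.choose_pos hk : 0 < card (powersetCard k s))
  exact ⟨t, mem_powersetCard.mp ht⟩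

theorem sum_map_eq_mul_card {t : Multiset α} {w : α → ℕ} {c : ℕ} (h : ∀ a ∈ t, w a = c) :
    (t.map w).sum = c * card t := by
  rw [map_congr rfl h, map_const', sum_replicate, smul_eq_mul, mul_comm]

theorem exists_le_sum_sum_map_eq_iff {s : Finset ι} {M : ι → Multiset α} {w : α → ℕ}
    {c : ι → ℕ} (hw : ∀ i ∈ s, ∀ a ∈ M i, w a = c i) (m : ℕ) :
    (∃ t ≤ ∑ i ∈ s, M i, (t.map w).sum = m) ↔
      ∃ f : ι → ℕ, (∀ i ∈ s, f i ≤ card (M i)) ∧ m = ∑ i ∈ s, c i * f i := by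
  have sum_map_sum (T : ι → Multiset α) :
      ((∑ i ∈ s, T i).map w).sum = ∑ i ∈ s, ((T i).map w).sum :=
    map_sum (sumAddMonoidHom.comp (mapAddMonoidHom w)) T s
  constructor
  · rintro ⟨t, ht, rfl⟩
    obtain ⟨T, hTM, rfl⟩ := exists_eq_sum_of_le_sum ht
    refine ⟨fun i => card (T i), fun i hi => card_le_card (hTM i hi), ?_⟩
    rw [sum_map_sum]
    exact Finset.sum_congr rfl fun i hi =>
      sum_map_eq_mul_card fun a ha => hw i hi a (mem_of_le (hTM i hi) ha)
  · rintro ⟨f, hf, rfl⟩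
    choose! T hTM hTcard using fun i hi => exists_le_card_eq (hf i hi)
    refine ⟨∑ i ∈ s, T i, Finset.sum_le_sum hTM, ?_⟩
    rw [sum_map_sum]
    refine Finset.sum_congr rfl fun i hi => ?_
    rw [sum_map_eq_mul_card fun a ha => hw i hi a (mem_of_le (hTM i hi) ha), hTcard i hi]

end Multiset

namespace Polynomial

section Field

variable {K : Type*} [Field K] [DecidableEq K]

theorem natDegree_eq_sum_natDegree_normalizedFactors {g : K[X]} (hg : g ≠ 0) :
    g.natDegree = ((normalizedFactors g).map natDegree).sum := by
  rw [← natDegree_multiset_prod _ (zero_notMem_normalizedFactors g)]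
  exact (natDegree_eq_of_degree_eq <|
    degree_eq_degree_of_associated (prod_normalizedFactors hg)).symm

theorem exists_dvd_natDegree_eq_iff {W : K[X]} (hW : W ≠ 0) (m : ℕ) :
    (∃ g, g ∣ W ∧ g.natDegree = m) ↔ ∃ t ≤ normalizedFactors W, (t.map natDegree).sum = m := by
  constructor
  · rintro ⟨g, hgW, rfl⟩
    have hg : g ≠ 0 := ne_zero_of_dvd_ne_zero hW hgW
    exact ⟨normalizedFactors g, (dvd_iff_normalizedFactors_le_normalizedFactors hg hW).mp hgW,
      (natDegree_eq_sum_natDegree_normalizedFactors hg).symm⟩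
  · rintro ⟨t, ht, rfl⟩
    exact ⟨t.prod, (Multiset.prod_dvd_prod_of_le ht).trans (prod_normalizedFactors hW).dvd,
      natDegree_multiset_prod t fun h0 =>
        zero_notMem_normalizedFactors W (Multiset.mem_of_le ht h0)⟩

theorem normalizedFactors_X_pow_sub_one {n : ℕ} (hn : 0 < n) :
    normalizedFactors (X ^ n - 1 : K[X]) =
      ∑ d ∈ n.divisors, normalizedFactors (cyclotomic d K) := by
  rw [← prod_cyclotomic_eq_X_pow_sub_one hn, Finset.prod_eq_multiset_prod,
    normalizedFactors_multiset_prod _ (by simp [cyclotomic_ne_zero]), Multiset.map_map]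
  rfl

end Field

theorem cyclotomic_eq_cyclotomic_ordCompl_pow (R : Type*) [Ring R] {p : ℕ} [Fact p.Prime]
    [CharP R p] {d : ℕ} (hd : d ≠ 0) :
    cyclotomic d R = cyclotomic (ordCompl[p] d) R ^ Nat.totient (ordProj[p] d) := by
  have hp : p.Prime := Fact.out
  rcases Nat.eq_zero_or_pos (d.factorization p) with h0 | h0
  · simp [h0]
  · conv_lhs => rw [← Nat.ordProj_mul_ordCompl_eq_self d p]
    rw [cyclotomic_mul_prime_pow_eq R (Nat.not_dvd_ordCompl hp hd) h0]
    obtain ⟨k, hk⟩ := Nat.exists_eq_succ_of_ne_zero h0.ne'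
    rw [hk, Nat.totient_prime_pow_succ hp, Nat.succ_sub_one, pow_succ, Nat.mul_sub_one]

theorem natDegree_eq_lstar_of_mem_normalizedFactors_cyclotomic {p d : ℕ} [Fact p.Prime]
    (hd : d ≠ 0) {q : (ZMod p)[X]} (hq : q ∈ normalizedFactors (cyclotomic d (ZMod p))) :
    q.natDegree = lstar p d := by
  have hp : p.Prime := Fact.out
  have hcop : p.Coprime (ordCompl[p] d) :=
    hp.coprime_iff_not_dvd.mpr (Nat.not_dvd_ordCompl hp hd)
  have hqd : q ∣ cyclotomic (ordCompl[p] d) (ZMod p) := by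
    have hq_dvd := dvd_of_mem_normalizedFactors hq
    rw [cyclotomic_eq_cyclotomic_ordCompl_pow (ZMod p) hd] at hq_dvd
    exact (prime_of_normalized_factor q hq).dvd_of_dvd_pow hq_dvd
  rw [natDegree_of_dvd_cyclotomic_of_irreducible (f := 1) (by simp) hcop hqd
    (irreducible_of_normalized_factor q hq), lstar, ← orderOf_units, ZMod.coe_unitOfCoprime,
    pow_one]

theorem card_normalizedFactors_cyclotomic {p d : ℕ} [Fact p.Prime] (hd : d ≠ 0) :
    Multiset.card (normalizedFactors (cyclotomic d (ZMod p))) = d.totient / lstar p d := by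
  have htotient :
      d.totient = lstar p d * Multiset.card (normalizedFactors (cyclotomic d (ZMod p))) := by
    rw [← natDegree_cyclotomic d (ZMod p),
      natDegree_eq_sum_natDegree_normalizedFactors (cyclotomic_ne_zero d _)]
    exact Multiset.sum_map_eq_mul_card (w := natDegree) fun q hq =>
      natDegree_eq_lstar_of_mem_normalizedFactors_cyclotomic hd hq
  have hlstar : 0 < lstar p d :=
    Nat.pos_of_mul_pos_right (htotient ▸ Nat.totient_pos.mpr (Nat.pos_of_ne_zero hd))
  rw [htotient, Nat.mul_div_cancel_left _ hlstar]

end Polynomial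

theorem stmt3 (p : ℕ) (hp : p.Prime) (n : ℕ) (hn : 0 < n) :
    PPractical p n ↔
      ∀ m : ℕ, 1 ≤ m → m ≤ n →
        ∃ f : ℕ → ℕ, (∀ d ∈ n.divisors, f d ≤ Nat.totient d / lstar p d) ∧
          m = ∑ d ∈ n.divisors, lstar p d * f d := by
  have : Fact p.Prime := ⟨hp⟩
  have hW : (X ^ n - 1 : (ZMod p)[X]) ≠ 0 := by simpa using X_pow_sub_C_ne_zero hn (1 : ZMod p)
  have hdeg : ∀ d ∈ n.divisors, ∀ q ∈ normalizedFactors (cyclotomic d (ZMod p)),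
      q.natDegree = lstar p d := fun d hd _ hq =>
    natDegree_eq_lstar_of_mem_normalizedFactors_cyclotomic (Nat.pos_of_mem_divisors hd).ne' hq
  refine forall_congr' fun m => forall_congr' fun _ => forall_congr' fun _ => ?_
  rw [exists_dvd_natDegree_eq_iff hW, normalizedFactors_X_pow_sub_one hn,
    Multiset.exists_le_sum_sum_map_eq_iff hdeg]
  refine exists_congr fun f => and_congr_left fun _ => forall₂_congr fun d hd => ?_
  rw [card_normalizedFactors_cyclotomic (Nat.pos_of_mem_divisors hd).ne']
end

section
/- For every positive integer n there exist infinitely many primes p such that n is p-practical. In particular, every positive integer is p-practical for at least one prime p. -/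
open scoped Classical

/-
If `p ≡ 1 (mod n)`, then `n ∣ p - 1 = #(ZMod p)ˣ`, so the cyclic group `(ZMod p)ˣ` contains a
primitive `n`-th root of unity and `X^n - 1` splits into linear factors over `𝔽_p`; a product of
any `m` of them is a divisor of degree `m`. By the elementary case of Dirichlet's theorem there
are infinitely many primes `p ≡ 1 (mod n)`.
-/

open Polynomial

theorem Polynomial.exists_dvd_natDegree_eq_of_card_roots_eq {R : Type*} [CommRing R] [IsDomain R]
    {f : R[X]} (hroots : Multiset.card f.roots = f.natDegree) {m : ℕ} (hm : m ≤ f.natDegree) :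
    ∃ g : R[X], g ∣ f ∧ g.natDegree = m := by
  have hsubsets : 0 < Multiset.card (f.roots.powersetCard m) := by
    rw [Multiset.card_powersetCard, hroots]; exact Nat.choose_pos hm
  obtain ⟨s, hs⟩ := Multiset.card_pos_iff_exists_mem.mp hsubsets
  obtain ⟨hs, hcard⟩ := Multiset.mem_powersetCard.mp hs
  refine ⟨(s.map fun a ↦ X - C a).prod, ?_, by rw [natDegree_multiset_prod_X_sub_C_eq_card, hcard]⟩
  calc (s.map fun a ↦ X - C a).prod ∣ (f.roots.map fun a ↦ X - C a).prod :=
        Multiset.prod_dvd_prod_of_le (Multiset.map_le_map hs)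
    _ ∣ f := ⟨C f.leadingCoeff, by rw [mul_comm, C_leadingCoeff_mul_prod_multiset_X_sub_C hroots]⟩

theorem IsPrimitiveRoot.exists_dvd_X_pow_sub_one_natDegree_eq {R : Type*} [CommRing R]
    [IsDomain R] {ζ : R} {n : ℕ} (hζ : IsPrimitiveRoot ζ n) {m : ℕ} (hm : m ≤ n) :
    ∃ g : R[X], g ∣ X ^ n - 1 ∧ g.natDegree = m := by
  rw [← C_1]
  refine exists_dvd_natDegree_eq_of_card_roots_eq ?_ (by rwa [natDegree_X_pow_sub_C])
  rw [natDegree_X_pow_sub_C, ← nthRoots, hζ.card_nthRoots_one]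

theorem FiniteField.exists_isPrimitiveRoot_of_dvd {K : Type*} [Field K] [Fintype K] {n : ℕ}
    (hn : n ∣ Fintype.card K - 1) : ∃ ζ : K, IsPrimitiveRoot ζ n := by
  obtain ⟨g, hg⟩ := IsCyclic.exists_ofOrder_eq_natCard (α := Kˣ)
  rw [Nat.card_eq_fintype_card, Fintype.card_units] at hg
  have hg0 : orderOf g ≠ 0 := (orderOf_pos g).ne'
  refine ⟨(g ^ (orderOf g / n) : Kˣ), ?_⟩
  rw [IsPrimitiveRoot.coe_units_iff, IsPrimitiveRoot.iff_orderOf,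
    orderOf_pow_orderOf_div hg0 (hg ▸ hn)]

theorem pPractical_of_modEq_one {p n : ℕ} (hp : p.Prime) (h : p ≡ 1 [MOD n]) :
    PPractical p n := by
  have : Fact p.Prime := ⟨hp⟩
  have hdvd : n ∣ Fintype.card (ZMod p) - 1 := by
    rw [ZMod.card]; exact (Nat.modEq_iff_dvd' hp.one_lt.le).mp h.symm
  obtain ⟨ζ, hζ⟩ := FiniteField.exists_isPrimitiveRoot_of_dvd hdvd
  exact fun m _ hm ↦ hζ.exists_dvd_X_pow_sub_one_natDegree_eq hm

theorem stmt5 (n : ℕ) (hn : 0 < n) :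
    {p : ℕ | p.Prime ∧ PPractical p n}.Infinite ∧
    ∃ p : ℕ, p.Prime ∧ PPractical p n := by
  have hinf : {p : ℕ | p.Prime ∧ PPractical p n}.Infinite := by
    refine Set.infinite_of_forall_exists_gt fun k ↦ ?_
    obtain ⟨p, hp, hkp, hmod⟩ := Nat.exists_prime_gt_modEq_one k hn.ne'
    exact ⟨p, ⟨hp, pPractical_of_modEq_one hp hmod⟩, hkp⟩
  exact ⟨hinf, hinf.nonempty⟩
end

section
/- For every positive integer n there exists a prime p such that ℓ_p*(d) = λ(d) for every positive divisor d of n. -/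
open scoped Classical

/-!
Call `a : ZMod n` a primitive λ-root of the divisors of `n` if its reduction modulo every `d ∣ n`
has order `λ(d)`. Such an `a` exists: for an odd prime power, `(ZMod (p ^ e))ˣ` is cyclic and a
generator maps onto a generator of every quotient; for a power of `2`, `a = 3` works; and the
Chinese remainder theorem glues coprime moduli, since both the order and `λ` of a product of
coprime moduli are the lcm of those of the factors. By Dirichlet's theorem some prime `p` is
congruent to `a` modulo `n`; it does not divide `n`, so `ℓ_p*(d)` is the order of `a` modulo `d`.
-/

def IsPrimitiveLambdaRootOfDivisors (n : ℕ) (a : ZMod n) : Prop :=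
  ∀ d (hd : d ∣ n), orderOf (ZMod.castHom hd (ZMod d) a) = carmichael d

lemma carmichael_eq_arithmeticFunction_carmichael {d : ℕ} (hd : d ≠ 0) :
    carmichael d = ArithmeticFunction.carmichael d :=
  (ArithmeticFunction.carmichael_eq_exponent hd).symm

lemma carmichael_mul {m n : ℕ} (h : m.Coprime n) :
    carmichael (m * n) = (carmichael m).lcm (carmichael n) := by
  rw [carmichael, Monoid.exponent_eq_of_mulEquiv
    ((Units.mapEquiv (ZMod.chineseRemainder h).toMulEquiv).trans MulEquiv.prodUnits),
    Monoid.exponent_prod]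
  rfl

lemma lstar_of_not_dvd {p d : ℕ} (h : ¬ p ∣ d) : lstar p d = orderOf (p : ZMod d) := by
  rw [lstar, Nat.factorization_eq_zero_of_not_dvd h, pow_zero, Nat.div_one]

lemma MonoidHom.forall_mem_zpowers_map_of_surjective {G H : Type*} [Group G] [Group H]
    {f : G →* H} (hf : Function.Surjective f) {g : G} (hg : ∀ x, x ∈ Subgroup.zpowers g) :
    ∀ y, y ∈ Subgroup.zpowers (f g) := by
  intro y
  obtain ⟨x, rfl⟩ := hf y
  obtain ⟨k, rfl⟩ := Subgroup.mem_zpowers_iff.mp (hg x)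
  exact ⟨k, by simp⟩

namespace ZMod

lemma castHom_castHom {k m n : ℕ} (hkm : k ∣ m) (hmn : m ∣ n) (x : ZMod n) :
    castHom hkm (ZMod k) (castHom hmn (ZMod m) x) = castHom (hkm.trans hmn) (ZMod k) x :=
  RingHom.congr_fun (castHom_comp hkm hmn) x

lemma chineseRemainder_fst {m n : ℕ} (h : m.Coprime n) (x : ZMod (m * n)) :
    (chineseRemainder h x).1 = castHom (dvd_mul_right m n) (ZMod m) x :=
  RingHom.congr_fun
    (Subsingleton.elim ((RingHom.fst _ _).comp (chineseRemainder h).toRingHom) _) x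

lemma chineseRemainder_snd {m n : ℕ} (h : m.Coprime n) (x : ZMod (m * n)) :
    (chineseRemainder h x).2 = castHom (dvd_mul_left n m) (ZMod n) x :=
  RingHom.congr_fun
    (Subsingleton.elim ((RingHom.snd _ _).comp (chineseRemainder h).toRingHom) _) x

lemma orderOf_eq_lcm_orderOf_castHom {m n : ℕ} (h : m.Coprime n) (x : ZMod (m * n)) :
    orderOf x = (orderOf (castHom (dvd_mul_right m n) (ZMod m) x)).lcm
      (orderOf (castHom (dvd_mul_left n m) (ZMod n) x)) := by
  rw [← MulEquiv.orderOf_eq (chineseRemainder h).toMulEquiv x, Prod.orderOf]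
  exact congrArg₂ _ (congrArg _ (chineseRemainder_fst h x))
    (congrArg _ (chineseRemainder_snd h x))

lemma orderOf_three_two_pow_add_three (n : ℕ) :
    orderOf (3 : ZMod (2 ^ (n + 3))) = 2 ^ (n + 1) := by
  have h9 : orderOf (9 : ZMod (2 ^ (n + 3))) = 2 ^ n := by
    convert orderOf_one_add_mul_prime_pow Nat.prime_two 3 (by norm_num) (by norm_num) 1
      (by norm_num) n using 2
    norm_num
  have hsq (k : ℕ) : (3 : ZMod (2 ^ (n + 3))) ^ 2 ^ (k + 1) = 9 ^ 2 ^ k := by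
    rw [pow_succ' 2 k, pow_mul]
    norm_num
  apply orderOf_eq_prime_pow
  · cases n with
    | zero => decide
    | succ k =>
      rw [hsq]
      exact pow_ne_one_of_lt_orderOf (by positivity) (h9 ▸ Nat.pow_lt_pow_succ (by norm_num))
  · rw [hsq, ← h9, pow_orderOf_eq_one]

lemma orderOf_three_two_pow (f : ℕ) : orderOf (3 : ZMod (2 ^ f)) = carmichael (2 ^ f) := by
  rw [carmichael_eq_arithmeticFunction_carmichael (by positivity)]
  match f with
  | 0 =>
    rw [ArithmeticFunction.carmichael_two_pow_of_le_two (by norm_num)]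
    simp [Subsingleton.elim (3 : ZMod 1) 1]
  | 1 =>
    rw [ArithmeticFunction.carmichael_two_pow_of_le_two (by norm_num)]
    simp [show (3 : ZMod 2) = 1 by decide]
  | 2 =>
    rw [ArithmeticFunction.carmichael_two_pow_of_le_two le_rfl]
    show orderOf (3 : ZMod 4) = 2
    exact orderOf_eq_prime (by decide) (by decide)
  | n + 3 =>
    rw [orderOf_three_two_pow_add_three,
      ArithmeticFunction.carmichael_two_pow_of_ne_two (by omega)]
    rfl

end ZMod

namespace IsPrimitiveLambdaRootOfDivisors

lemma isUnit {n : ℕ} [NeZero n] {a : ZMod n} (ha : IsPrimitiveLambdaRootOfDivisors n a) :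
    IsUnit a := by
  have hord := ha n dvd_rfl
  rw [ZMod.castHom_self, RingHom.id_apply] at hord
  refine IsOfFinOrder.isUnit (orderOf_pos_iff.mp ?_)
  rw [hord, carmichael]
  exact Monoid.exponent_pos.mpr Monoid.ExponentExists.of_finite

lemma of_castHom {m n : ℕ} (h : m.Coprime n) {x : ZMod (m * n)}
    (hm : IsPrimitiveLambdaRootOfDivisors m (ZMod.castHom (dvd_mul_right m n) (ZMod m) x))
    (hn : IsPrimitiveLambdaRootOfDivisors n (ZMod.castHom (dvd_mul_left n m) (ZMod n) x)) :
    IsPrimitiveLambdaRootOfDivisors (m * n) x := by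
  intro d hd
  obtain ⟨d₁, d₂, hd₁, hd₂, rfl⟩ := exists_dvd_and_dvd_of_dvd_mul hd
  have hd₁₂ : d₁.Coprime d₂ := (h.coprime_dvd_left hd₁).coprime_dvd_right hd₂
  rw [ZMod.orderOf_eq_lcm_orderOf_castHom hd₁₂, carmichael_mul hd₁₂, ← hm d₁ hd₁,
    ← hn d₂ hd₂]
  simp only [ZMod.castHom_castHom]

lemma three_two_pow (e : ℕ) : IsPrimitiveLambdaRootOfDivisors (2 ^ e) 3 := by
  intro d hd
  obtain ⟨f, -, rfl⟩ := (Nat.dvd_prime_pow Nat.prime_two).mp hd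
  rw [map_ofNat]
  exact ZMod.orderOf_three_two_pow f

end IsPrimitiveLambdaRootOfDivisors

lemma exists_isPrimitiveLambdaRootOfDivisors_of_isCyclic {n : ℕ} [NeZero n]
    [IsCyclic (ZMod n)ˣ] : ∃ a, IsPrimitiveLambdaRootOfDivisors n a := by
  obtain ⟨g, hg⟩ := IsCyclic.exists_generator (α := (ZMod n)ˣ)
  refine ⟨g, fun d hd => ?_⟩
  have hgen := MonoidHom.forall_mem_zpowers_map_of_surjective (ZMod.unitsMap_surjective hd) hg
  have : IsCyclic (ZMod d)ˣ := ⟨⟨_, hgen⟩⟩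
  have : NeZero d := ⟨fun h => NeZero.ne n (Nat.eq_zero_of_zero_dvd (h ▸ hd))⟩
  rw [carmichael, IsCyclic.exponent_eq_card, ← orderOf_eq_card_of_forall_mem_zpowers hgen,
    ← orderOf_units]
  rfl

lemma exists_isPrimitiveLambdaRootOfDivisors_prime_pow {p : ℕ} (hp : p.Prime) (e : ℕ) :
    ∃ a, IsPrimitiveLambdaRootOfDivisors (p ^ e) a := by
  obtain rfl | hp2 := eq_or_ne p 2
  · exact ⟨3, .three_two_pow e⟩
  · have : NeZero (p ^ e) := ⟨pow_ne_zero e hp.ne_zero⟩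
    have := ZMod.isCyclic_units_of_prime_pow p hp hp2 e
    exact exists_isPrimitiveLambdaRootOfDivisors_of_isCyclic

lemma exists_isPrimitiveLambdaRootOfDivisors {n : ℕ} (hn : n ≠ 0) :
    ∃ a, IsPrimitiveLambdaRootOfDivisors n a := by
  induction n using Nat.recOnPrimeCoprime with
  | zero => exact absurd rfl hn
  | prime_pow p e hp => exact exists_isPrimitiveLambdaRootOfDivisors_prime_pow hp e
  | coprime m n hm hn h ihm ihn =>
    obtain ⟨a, ha⟩ := ihm (by omega)
    obtain ⟨b, hb⟩ := ihn (by omega)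
    refine ⟨(ZMod.chineseRemainder h).symm (a, b), .of_castHom h ?_ ?_⟩
    · rwa [← ZMod.chineseRemainder_fst h, RingEquiv.apply_symm_apply]
    · rwa [← ZMod.chineseRemainder_snd h, RingEquiv.apply_symm_apply]

theorem stmt6 (n : ℕ) (hn : 0 < n) :
    ∃ p : ℕ, p.Prime ∧ ∀ d : ℕ, d ∣ n → 0 < d → lstar p d = carmichael d := by
  have : NeZero n := ⟨hn.ne'⟩
  obtain ⟨a, ha⟩ := exists_isPrimitiveLambdaRootOfDivisors hn.ne'
  obtain ⟨p, -, hp, hpa⟩ := Nat.forall_exists_prime_gt_and_eq_mod ha.isUnit 0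
  refine ⟨p, hp, fun d hd _ => ?_⟩
  have hpn : p.Coprime n := (ZMod.isUnit_iff_coprime p n).mp (hpa ▸ ha.isUnit)
  have hpd : ¬ p ∣ d := hp.coprime_iff_not_dvd.mp (hpn.coprime_dvd_right hd)
  rw [lstar_of_not_dvd hpd, ← map_natCast (ZMod.castHom hd (ZMod d)) p, hpa, ha d hd]
end

section
/- Suppose n = p_1^{e_1}···p_k^{e_k} is φ-practical, where p_1 < p_2 < ··· < p_k are primes and e_i ≥ 1 for i = 1,…,k. Define m_0 = 1 and m_i = p_1^{e_1}···p_i^{e_i} for i = 1,…,k−1. Then p_{i+1} ≤ m_i + 2 holds for all i with 0 ≤ i ≤ k−1. That is, every φ-practical number is weakly φ-practical. -/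
open scoped Classical

/-! Let `q ∣ n` be prime and let `m` be the part of `n` built from the primes below `q`.
Over `ℚ`, `X^n - 1 = (X^m - 1) · ∏_{d ∣ n, d ∤ m} Φ_d` with every `Φ_d` irreducible, so a
divisor of degree `m + 1` must contain some `Φ_d` with `d ∤ m`, giving `φ(d) ≤ m + 1`. But
`d ∤ m` means some prime `p ≥ q` divides `d`, so `q - 1 ≤ p - 1 ≤ φ(d) ≤ m + 1`. -/

open Polynomial

theorem Finsupp.filter_le_self {ι α : Type*} [AddCommMonoid α] [PartialOrder α]
    [CanonicallyOrderedAdd α] (p : ι → Prop) [DecidablePred p] (f : ι →₀ α) :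
    f.filter p ≤ f := fun i => by
  rw [Finsupp.filter_apply]
  split_ifs <;> simp

namespace Nat

variable {n : ℕ} (P : ℕ → Prop) [DecidablePred P]

theorem prod_primeFactors_filter_pow_eq_prod_filter_factorization :
    ∏ r ∈ n.primeFactors.filter P, r ^ n.factorization r =
      (n.factorization.filter P).prod (· ^ ·) := by
  rw [Finsupp.prod_filter_index, Finsupp.support_filter, support_factorization]

theorem factorization_prod_primeFactors_filter_pow :
    (∏ r ∈ n.primeFactors.filter P, r ^ n.factorization r).factorization =
      n.factorization.filter P := by
  rw [prod_primeFactors_filter_pow_eq_prod_filter_factorization,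
    factorization_prod_pow_eq_self_of_le_factorization (Finsupp.filter_le_self _ _)]

theorem prod_primeFactors_filter_pow_dvd :
    ∏ r ∈ n.primeFactors.filter P, r ^ n.factorization r ∣ n := by
  rw [prod_primeFactors_filter_pow_eq_prod_filter_factorization]
  exact prod_pow_dvd_of_le_factorization (Finsupp.filter_le_self _ _)

variable {P}

theorem prod_primeFactors_filter_pow_ne_zero :
    ∏ r ∈ n.primeFactors.filter P, r ^ n.factorization r ≠ 0 :=
  Finset.prod_ne_zero_iff.2 fun _ hr =>
    pow_ne_zero _ (prime_of_mem_primeFactors (Finset.mem_filter.1 hr).1).ne_zero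

theorem Prime.not_dvd_prod_primeFactors_filter_pow {p : ℕ} (hp : p.Prime) (hP : ¬ P p) :
    ¬ p ∣ ∏ r ∈ n.primeFactors.filter P, r ^ n.factorization r := by
  intro hdvd
  have := hp.factorization_pos_of_dvd prod_primeFactors_filter_pow_ne_zero hdvd
  rw [factorization_prod_primeFactors_filter_pow, Finsupp.filter_apply_neg _ _ hP] at this
  exact this.false

theorem dvd_prod_primeFactors_filter_pow_of_forall_prime_dvd {d : ℕ} (hn : n ≠ 0) (hd : d ∣ n)
    (hP : ∀ p, p.Prime → p ∣ d → P p) :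
    d ∣ ∏ r ∈ n.primeFactors.filter P, r ^ n.factorization r := by
  have hd0 : d ≠ 0 := ne_zero_of_dvd_ne_zero hn hd
  rw [← factorization_le_iff_dvd hd0 prod_primeFactors_filter_pow_ne_zero,
    factorization_prod_primeFactors_filter_pow, Finsupp.le_iff]
  intro p hp
  rw [support_factorization, mem_primeFactors] at hp
  rw [Finsupp.filter_apply_pos _ _ (hP p hp.1 hp.2.1)]
  exact (factorization_le_iff_dvd hd0 hn).2 hd p

theorem sub_one_le_totient_of_prime_dvd {p d : ℕ} (hp : p.Prime) (hd : d ≠ 0) (hpd : p ∣ d) :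
    p - 1 ≤ φ d :=
  totient_prime hp ▸ le_of_dvd (totient_pos.2 (pos_of_ne_zero hd)) (totient_dvd_of_dvd hpd)

end Nat

namespace Polynomial

theorem natDegree_eq_totient_of_irreducible_dvd_cyclotomic {r : ℚ[X]} (hr : Irreducible r)
    {d : ℕ} (hrd : r ∣ cyclotomic d ℚ) : r.natDegree = d.totient := by
  obtain rfl | hd := d.eq_zero_or_pos
  · exact absurd (isUnit_of_dvd_one (by simpa using hrd)) hr.not_isUnit
  rw [← natDegree_cyclotomic d ℚ]
  exact natDegree_eq_of_degree_eq <| degree_eq_degree_of_associated <|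
    hr.associated_of_dvd (cyclotomic.irreducible_rat hd) hrd

theorem X_pow_sub_one_eq_mul_prod_cyclotomic_sdiff {R : Type*} [CommRing R] {m n : ℕ}
    (hm : 0 < m) (hn : n ≠ 0) (hmn : m ∣ n) :
    (X ^ n - 1 : R[X]) = (X ^ m - 1) * ∏ d ∈ n.divisors \ m.divisors, cyclotomic d R := by
  rw [← prod_cyclotomic_eq_X_pow_sub_one (Nat.pos_of_ne_zero hn),
    ← prod_cyclotomic_eq_X_pow_sub_one hm, mul_comm,
    Finset.prod_sdiff (Nat.divisors_subset_of_dvd hn hmn)]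

theorem exists_totient_le_natDegree_of_dvd_mul_prod_cyclotomic {f g : ℚ[X]} {S : Finset ℕ}
    (hf : f ≠ 0) (hfg : f.natDegree < g.natDegree)
    (hg : g ∣ f * ∏ d ∈ S, cyclotomic d ℚ) : ∃ d ∈ S, d.totient ≤ g.natDegree := by
  obtain ⟨g₁, g₂, hg₁, hg₂, rfl⟩ := exists_dvd_and_dvd_of_dvd_mul hg
  have hg₁₂ : g₁ * g₂ ≠ 0 := by rintro h; simp [h] at hfg
  have hg₂_deg : 0 < g₂.natDegree := by
    rw [natDegree_mul (left_ne_zero_of_mul hg₁₂) (right_ne_zero_of_mul hg₁₂)] at hfg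
    have := natDegree_le_of_dvd hg₁ hf
    omega
  obtain ⟨r, hr, hrg₂⟩ := WfDvdMonoid.exists_irreducible_factor
    (fun hu => hg₂_deg.ne' (natDegree_eq_zero_of_isUnit hu)) (right_ne_zero_of_mul hg₁₂)
  obtain ⟨d, hdS, hrd⟩ := hr.prime.exists_mem_finset_dvd (hrg₂.trans hg₂)
  refine ⟨d, hdS, ?_⟩
  rw [← natDegree_eq_totient_of_irreducible_dvd_cyclotomic hr hrd]
  exact natDegree_le_of_dvd (hrg₂.trans (dvd_mul_left _ _)) hg₁₂

end Polynomial

theorem PhiPractical.exists_totient_le_of_dvd {n m : ℕ} (h : PhiPractical n) (hn : n ≠ 0)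
    (hm : 0 < m) (hmn : m ∣ n) (hne : m ≠ n) :
    ∃ d ∈ n.divisors, ¬ d ∣ m ∧ d.totient ≤ m + 1 := by
  have hlt : m < n := lt_of_le_of_ne (Nat.le_of_dvd (Nat.pos_of_ne_zero hn) hmn) hne
  obtain ⟨g, hg, hg_deg⟩ := h (m + 1) m.succ_pos hlt
  have hgℚ : g.map (Int.castRingHom ℚ) ∣ (X ^ m - 1) *
      ∏ d ∈ n.divisors \ m.divisors, cyclotomic d ℚ := by
    rw [← X_pow_sub_one_eq_mul_prod_cyclotomic_sdiff hm hn hmn]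
    simpa using Polynomial.map_dvd (Int.castRingHom ℚ) hg
  have hdeg : (g.map (Int.castRingHom ℚ)).natDegree = m + 1 := by
    rw [natDegree_map_eq_of_injective Int.cast_injective, hg_deg]
  obtain ⟨d, hd, hφ⟩ := exists_totient_le_natDegree_of_dvd_mul_prod_cyclotomic
    (X_pow_sub_C_ne_zero hm 1) (by rw [hdeg, natDegree_X_pow_sub_C]; omega) hgℚ
  obtain ⟨hdn, hdm⟩ := Finset.mem_sdiff.1 hd
  exact ⟨d, hdn, fun hdvd => hdm (Nat.mem_divisors.2 ⟨hdvd, hm.ne'⟩), hdeg ▸ hφ⟩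

theorem stmt7 (n : ℕ) (hn : 0 < n) (h : PhiPractical n) :
    WeaklyPhiPractical n := by
  refine ⟨hn, fun q hq hqn => ?_⟩
  set m := ∏ r ∈ n.primeFactors.filter (· < q), r ^ n.factorization r
  by_contra! hqm
  have hmn : m ∣ n := Nat.prod_primeFactors_filter_pow_dvd _
  have hq_not_dvd : ¬ q ∣ m := hq.not_dvd_prod_primeFactors_filter_pow (lt_irrefl q)
  have hm_ne : m ≠ n := fun heq => hq_not_dvd (heq ▸ hqn)
  obtain ⟨d, hdn, hdm, hφ⟩ := h.exists_totient_le_of_dvd hn.ne'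
    (Nat.pos_of_ne_zero Nat.prod_primeFactors_filter_pow_ne_zero) hmn hm_ne
  obtain ⟨p, hp, hpd, hqp⟩ : ∃ p, p.Prime ∧ p ∣ d ∧ q ≤ p := by
    by_contra! hsmall
    exact hdm (Nat.dvd_prod_primeFactors_filter_pow_of_forall_prime_dvd hn.ne'
      (Nat.dvd_of_mem_divisors hdn) hsmall)
  have hp_le := Nat.sub_one_le_totient_of_prime_dvd hp (Nat.pos_of_mem_divisors hdn).ne' hpd
  omega
end

section
/- Every λ-practical number is weakly φ-practical. That is, if n = p_1^{e_1}···p_k^{e_k} is λ-practical with primes p_1 < ··· < p_k and e_i ≥ 1, then p_{i+1} ≤ p_1^{e_1}···p_i^{e_i} + 2 for all 0 ≤ i ≤ k−1 (empty product equal to 1). -/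
/-!
Suppose a prime `q ∣ n` has `q > m + 2`, where `m` is the `q`-smooth part of `n`. By Dirichlet's
theorem and the Chinese remainder theorem there is a prime `p > n` that is a primitive root
modulo every prime factor `r ≥ q` of `n`. As `n` is `p`-practical, `X^n - 1` has a divisor of
degree `m + 1` over `𝔽_p`; it is separable, so one of its roots `β` has order `d ∣ n` with
`d ∤ m`, and `d ∣ p^t - 1` where `t ≤ m + 1` is the degree of `β` over `𝔽_p`. Since `d ∤ m`,
some prime `r ≥ q` divides `d`, and then `r - 1 = ord_r p ∣ t`, so `r ≤ m + 2 < q ≤ r`.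
-/

open scoped Classical

open Polynomial IntermediateField

theorem ZMod.exists_orderOf_natCast_eq_sub_one {r : ℕ} (hr : r.Prime) :
    ∃ b : ℕ, orderOf (b : ZMod r) = r - 1 := by
  have := Fact.mk hr
  obtain ⟨g, hg⟩ := IsCyclic.exists_ofOrder_eq_natCard (α := (ZMod r)ˣ)
  refine ⟨(g : ZMod r).val, ?_⟩
  rw [ZMod.natCast_zmod_val, orderOf_units, hg, Nat.card_eq_fintype_card, ZMod.card_units]

theorem Nat.exists_prime_gt_forall_orderOf_eq_sub_one (S : Finset ℕ) (hS : ∀ r ∈ S, r.Prime)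
    (N : ℕ) : ∃ p, p.Prime ∧ N < p ∧ ∀ r ∈ S, orderOf (p : ZMod r) = r - 1 := by
  choose b hb using fun r (hr : r ∈ S) => ZMod.exists_orderOf_natCast_eq_sub_one (hS r hr)
  obtain ⟨k, hk⟩ := Nat.chineseRemainderOfFinset (fun r => if hr : r ∈ S then b r hr else 0) id S
    (fun r hr => (hS r hr).ne_zero)
    (fun r hr s hs hrs => (Nat.coprime_primes (hS r hr) (hS s hs)).mpr hrs)
  have hkr : ∀ r (hr : r ∈ S), (k : ZMod r) = b r hr := fun r hr => by
    simpa [hr] using (ZMod.natCast_eq_natCast_iff _ _ _).mpr (hk r hr)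
  have hk_unit : IsUnit (k : ZMod (∏ r ∈ S, r)) := by
    refine (ZMod.isUnit_iff_coprime _ _).mpr (Nat.Coprime.prod_right fun r hr => ?_)
    have hpos : 0 < r - 1 := Nat.sub_pos_of_lt (hS r hr).one_lt
    rw [← ZMod.isUnit_iff_coprime, hkr r hr]
    exact (orderOf_pos_iff.mp (hb r hr ▸ hpos)).isUnit
  have : NeZero (∏ r ∈ S, r) := ⟨Finset.prod_ne_zero_iff.mpr fun r hr => (hS r hr).ne_zero⟩
  obtain ⟨p, hNp, hp, hpk⟩ := Nat.forall_exists_prime_gt_and_eq_mod hk_unit N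
  refine ⟨p, hp, hNp, fun r hr => ?_⟩
  have hpk_r : p ≡ k [MOD r] :=
    ((ZMod.natCast_eq_natCast_iff _ _ _).mp hpk).of_dvd (Finset.dvd_prod_of_mem id hr)
  rw [(ZMod.natCast_eq_natCast_iff _ _ _).mpr hpk_r, hkr r hr, hb r hr]

theorem Polynomial.Separable.exists_aeval_eq_zero_pow_ne_one {K : Type*} [Field K] {g : K[X]}
    (hg : g.Separable) {m : ℕ} (hm0 : m ≠ 0) (hm : m < g.natDegree) :
    ∃ β : AlgebraicClosure K, aeval β g = 0 ∧ β ^ m ≠ 1 := by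
  set zeros := (g.map (algebraMap K (AlgebraicClosure K))).roots.toFinset
  have hcard : zeros.card = g.natDegree := by
    rw [Multiset.toFinset_card_of_nodup (nodup_roots hg.map),
      ← natDegree_map (algebraMap K (AlgebraicClosure K)),
      ← splits_iff_card_roots.mp (IsAlgClosed.splits _)]
  by_contra! h
  have hsub : zeros ⊆ nthRootsFinset m (1 : AlgebraicClosure K) := fun β hβ => by
    rw [Multiset.mem_toFinset, mem_roots (map_ne_zero fun h0 => by simp [h0] at hm),
      IsRoot, eval_map_algebraMap] at hβ
    exact (mem_nthRootsFinset (Nat.pos_of_ne_zero hm0) 1).mpr (h β hβ)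
  have := (Finset.card_le_card hsub).trans
    ((Multiset.toFinset_card_le _).trans (card_nthRoots m (1 : AlgebraicClosure K)))
  omega

theorem orderOf_dvd_card_pow_natDegree_minpoly_sub_one {K L : Type*} [Field K] [Finite K]
    [Field L] [Algebra K L] {β : L} (hβ : IsIntegral K β) (hβ0 : β ≠ 0) :
    orderOf β ∣ Nat.card K ^ (minpoly K β).natDegree - 1 := by
  have : FiniteDimensional K K⟮β⟯ := IntermediateField.adjoin.finiteDimensional hβ
  have : Finite K⟮β⟯ := Module.finite_of_finite K
  have : Fintype K⟮β⟯ := Fintype.ofFinite _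
  have hcard : Fintype.card K⟮β⟯ = Nat.card K ^ (minpoly K β).natDegree := by
    rw [← Nat.card_eq_fintype_card, Module.natCard_eq_pow_finrank (K := K),
      IntermediateField.adjoin.finrank hβ]
  have hpow : (⟨β, mem_adjoin_simple_self K β⟩ : K⟮β⟯) ^ (Fintype.card K⟮β⟯ - 1) = 1 :=
    FiniteField.pow_card_sub_one_eq_one _ fun h => hβ0 (congrArg Subtype.val h)
  exact hcard ▸ orderOf_dvd_of_pow_eq_one (congrArg Subtype.val hpow)

theorem Polynomial.exists_dvd_card_pow_sub_one_of_dvd_X_pow_sub_one {K : Type*} [Field K] [Finite K]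
    {n m : ℕ} (hn : (n : K) ≠ 0) {g : K[X]} (hg : g ∣ X ^ n - 1) (hm0 : m ≠ 0)
    (hm : m < g.natDegree) :
    ∃ d, d ∣ n ∧ ¬ d ∣ m ∧ ∃ t, 0 < t ∧ t ≤ g.natDegree ∧ d ∣ Nat.card K ^ t - 1 := by
  have hsep : g.Separable := by
    refine Separable.of_dvd ?_ hg
    simpa using separable_X_pow_sub_C (1 : K) hn one_ne_zero
  obtain ⟨β, hβg, hβm⟩ := hsep.exists_aeval_eq_zero_pow_ne_one hm0 hm
  have hβn : β ^ n = 1 := by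
    simpa [sub_eq_zero] using aeval_eq_zero_of_dvd_aeval_eq_zero hg hβg
  have hn0 : n ≠ 0 := by rintro rfl; simp at hn
  have hβ0 : β ≠ 0 := by rintro rfl; simp [hn0] at hβn
  have hβint : IsIntegral K β := Algebra.IsIntegral.isIntegral β
  have hg0 : g ≠ 0 := by rintro rfl; simp at hm
  refine ⟨orderOf β, orderOf_dvd_of_pow_eq_one hβn,
    fun h => hβm (orderOf_dvd_iff_pow_eq_one.mp h), _, minpoly.natDegree_pos hβint,
    natDegree_le_of_dvd (minpoly.dvd K β hβg) hg0,
    orderOf_dvd_card_pow_natDegree_minpoly_sub_one hβint hβ0⟩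

theorem Nat.prod_primeFactors_filter_mul_prod_filter_not {n : ℕ} (hn : n ≠ 0) (P : ℕ → Prop)
    [DecidablePred P] :
    (∏ r ∈ n.primeFactors.filter P, r ^ n.factorization r) *
      ∏ r ∈ n.primeFactors.filter (¬ P ·), r ^ n.factorization r = n := by
  rw [Finset.prod_filter_mul_prod_filter_not]
  exact Nat.prod_factorization_pow_eq_self hn

theorem Nat.dvd_prod_primeFactors_filter_of_dvd {n d : ℕ} (hn : n ≠ 0) (P : ℕ → Prop)
    [DecidablePred P] (hd : d ∣ n) (hP : ∀ r, r.Prime → r ∣ d → P r) :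
    d ∣ ∏ r ∈ n.primeFactors.filter P, r ^ n.factorization r := by
  rw [← Nat.prod_primeFactors_filter_mul_prod_filter_not hn P] at hd
  refine Nat.Coprime.dvd_of_dvd_mul_right (Nat.Coprime.prod_right fun r hr => ?_) hd
  obtain ⟨hr, hPr⟩ := Finset.mem_filter.mp hr
  exact Nat.Coprime.pow_right _ <| Nat.Coprime.symm <|
    (Nat.Prime.coprime_iff_not_dvd (Nat.prime_of_mem_primeFactors hr)).mpr
      fun hrd => hPr (hP r (Nat.prime_of_mem_primeFactors hr) hrd)

theorem Nat.prod_primeFactors_filter_lt_mul_dvd {n q : ℕ} (hn : n ≠ 0) (hq : q.Prime)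
    (hqn : q ∣ n) : (∏ r ∈ n.primeFactors.filter (· < q), r ^ n.factorization r) * q ∣ n := by
  refine Nat.Coprime.mul_dvd_of_dvd_of_dvd (Nat.Coprime.prod_left fun r hr => ?_)
    (Dvd.intro _ (Nat.prod_primeFactors_filter_mul_prod_filter_not hn _)) hqn
  obtain ⟨hr, hrq⟩ := Finset.mem_filter.mp hr
  exact ((Nat.coprime_primes (Nat.prime_of_mem_primeFactors hr) hq).mpr hrq.ne).pow_left _

theorem stmt8 (n : ℕ) (hn : 0 < n) (h : LambdaPractical n) :
    WeaklyPhiPractical n := by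
  refine ⟨hn, fun q hq hqn => ?_⟩
  set m := ∏ r ∈ n.primeFactors.filter (· < q), r ^ n.factorization r
  by_contra! hmq
  have hmn : m * q ∣ n := Nat.prod_primeFactors_filter_lt_mul_dvd hn.ne' hq hqn
  have hm0 : m ≠ 0 := by rintro h0; simp [h0] at hmn; omega
  have hm_lt : m < n := by
    have := Nat.le_of_dvd hn hmn; nlinarith [hq.two_le]
  obtain ⟨p, hp, hnp, hp_root⟩ :=
    Nat.exists_prime_gt_forall_orderOf_eq_sub_one (n.primeFactors.filter (q ≤ ·))
      (fun r hr => Nat.prime_of_mem_primeFactors (Finset.mem_filter.mp hr).1) n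
  have := Fact.mk hp
  have hpn : (n : ZMod p) ≠ 0 := by
    rw [Ne, ZMod.natCast_eq_zero_iff]; exact fun hd => (Nat.le_of_dvd hn hd).not_gt hnp
  obtain ⟨g, hg, hg_deg⟩ := h p hp (m + 1) (by omega) hm_lt
  obtain ⟨d, hdn, hdm, t, ht0, htm, hdt⟩ :=
    exists_dvd_card_pow_sub_one_of_dvd_X_pow_sub_one hpn hg hm0 (by omega)
  obtain ⟨r, hr, hrd, hqr⟩ : ∃ r, r.Prime ∧ r ∣ d ∧ q ≤ r := by
    by_contra! hsmall
    exact hdm (Nat.dvd_prod_primeFactors_filter_of_dvd hn.ne' _ hdn hsmall)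
  have hpt : (p : ZMod r) ^ t = 1 := by
    have := (ZMod.natCast_eq_zero_iff _ _).mpr (hrd.trans hdt)
    rwa [Nat.card_zmod, Nat.cast_sub (Nat.one_le_pow _ _ hp.pos), sub_eq_zero, Nat.cast_pow,
      Nat.cast_one] at this
  have hrt : r - 1 ∣ t := hp_root r (by simp [hr, hrd.trans hdn, hn.ne', hqr]) ▸
    orderOf_dvd_of_pow_eq_one hpt
  have := Nat.le_of_dvd ht0 hrt
  omega
end

section
/- Let M be a φ-practical number and p a prime with gcd(p, M) = 1. Then pM is φ-practical if and only if p ≤ M + 2. Moreover, for every integer k ≥ 2, p^k·M is φ-practical if and only if p ≤ M + 1. -/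
open scoped Classical

/-!
Since `X^n - 1 = ∏_{d ∣ n} Φ_d` with every `Φ_d` irreducible over `ℚ`, the monic divisors of
`X^n - 1` over `ℚ` are the products of subsets of these cyclotomic factors, so `n` is
φ-practical iff every `m ≤ n` is a sum `∑_{d ∈ S} φ(d)` over a set `S` of divisors of `n`.

The divisors of `p^k M` are the `p^j e` with `e ∣ M`, so when `M` is φ-practical every
`∑_{j ≤ k} φ(p^j) a_j` with all `a_j ≤ M` is such a sum for `p^k M`. A greedy expansion in the
"digits" `a_j` reaches every `m ≤ p^k M` as soon as `φ(p^(j+1)) ≤ p^j M + 1` for all `j < k`,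
that is `p ≤ M + 1`, or `p ≤ M + 2` when `k = 1`. Conversely, no `m` with
`p^j M < m < φ(p^(j+1))` is such a sum: a divisor divisible by `p^(j+1)` has too large a
totient, and the remaining ones divide `p^j M`, whose totients add up to `p^j M`. Take
`m = M + 1` with `j = 0`, and `m = p M + 1` with `j = 1`.
-/

open Polynomial Finset
open scoped Nat

theorem Polynomial.exists_subset_eq_prod_of_dvd_prod {F ι : Type*} [Field F] {f : ι → F[X]}
    {t : Finset ι} (hirr : ∀ i ∈ t, Irreducible (f i)) (hmon : ∀ i ∈ t, (f i).Monic)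
    {g : F[X]} (hg : g.Monic) (hdvd : g ∣ ∏ i ∈ t, f i) :
    ∃ S ⊆ t, g = ∏ i ∈ S, f i := by
  induction t using Finset.induction_on generalizing g with
  | empty =>
    rw [prod_empty] at hdvd
    exact ⟨∅, subset_rfl, by rw [prod_empty, hg.eq_one_of_isUnit (isUnit_of_dvd_one hdvd)]⟩
  | insert a t ha ih =>
    rw [prod_insert ha] at hdvd
    have hirr' := fun i hi => hirr i (mem_insert_of_mem hi)
    have hmon' := fun i hi => hmon i (mem_insert_of_mem hi)
    have ha_irr := hirr a (mem_insert_self a t)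
    rcases ha_irr.isCoprime_or_dvd g with hcop | ⟨g', rfl⟩
    · obtain ⟨S, hS, rfl⟩ := ih hirr' hmon' hg (hcop.symm.dvd_of_dvd_mul_left hdvd)
      exact ⟨S, hS.trans (subset_insert a t), rfl⟩
    · have hg' := (hmon a (mem_insert_self a t)).of_mul_monic_left hg
      obtain ⟨S, hS, rfl⟩ := ih hirr' hmon' hg' ((mul_dvd_mul_iff_left ha_irr.ne_zero).mp hdvd)
      exact ⟨insert a S, insert_subset_insert a hS, (prod_insert fun h => ha (hS h)).symm⟩

def TotientSubsetSum (n m : ℕ) : Prop := ∃ S ⊆ n.divisors, ∑ d ∈ S, φ d = m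

theorem phiPractical_iff_forall_totientSubsetSum (n : ℕ) :
    PhiPractical n ↔ ∀ m ≤ n, TotientSubsetSum n m := by
  constructor
  · intro h m hmn
    rcases m.eq_zero_or_pos with rfl | hm
    · exact ⟨∅, empty_subset _, sum_empty⟩
    obtain ⟨g, hg, rfl⟩ := h _ hm hmn
    have hg0 : g.map (Int.castRingHom ℚ) ≠ 0 := by
      rw [Ne, Polynomial.map_eq_zero_iff (RingHom.injective_int _)]
      rintro rfl
      simp at hm
    have hdvd : normalize (g.map (Int.castRingHom ℚ)) ∣ ∏ d ∈ n.divisors, cyclotomic d ℚ := by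
      rw [prod_cyclotomic_eq_X_pow_sub_one (by omega), normalize_dvd_iff]
      simpa using Polynomial.map_dvd (Int.castRingHom ℚ) hg
    obtain ⟨S, hS, hprod⟩ := exists_subset_eq_prod_of_dvd_prod
      (fun d hd => cyclotomic.irreducible_rat (Nat.pos_of_mem_divisors hd))
      (fun d _ => cyclotomic.monic d ℚ) (monic_normalize hg0) hdvd
    refine ⟨S, hS, ?_⟩
    have hdeg := congrArg natDegree hprod
    rw [natDegree_eq_of_degree_eq degree_normalize,
      natDegree_map_eq_of_injective (RingHom.injective_int _),
      natDegree_prod _ _ fun d _ => cyclotomic_ne_zero d ℚ] at hdeg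
    simp [hdeg, natDegree_cyclotomic]
  · intro h m hm hmn
    obtain ⟨S, hS, rfl⟩ := h m hmn
    refine ⟨∏ d ∈ S, cyclotomic d ℤ, ?_, ?_⟩
    · rw [← prod_cyclotomic_eq_X_pow_sub_one (by omega) ℤ]
      exact prod_dvd_prod_of_subset _ _ _ hS
    · rw [natDegree_prod _ _ fun d _ => cyclotomic_ne_zero d ℤ]
      simp [natDegree_cyclotomic]

theorem totientSubsetSum_mul_of_coprime {m n : ℕ} (hmn : m.Coprime n) {a : ℕ → ℕ}
    (ha : ∀ d ∈ m.divisors, TotientSubsetSum n (a d)) :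
    TotientSubsetSum (m * n) (∑ d ∈ m.divisors, φ d * a d) := by
  choose! T hT hsum using ha
  have hmem : ∀ x ∈ m.divisors.sigma T, x.1 ∈ m.divisors ∧ x.2 ∈ n.divisors :=
    fun x hx => ⟨(mem_sigma.mp hx).1, hT _ (mem_sigma.mp hx).1 (mem_sigma.mp hx).2⟩
  -- `d` is recovered from `d * e` as `gcd (d * e) m`
  have hgcd : ∀ {d e}, d ∣ m → e ∣ n → Nat.gcd (d * e) m = d := fun hd he => by
    rw [Nat.Coprime.gcd_mul_right_cancel _ (hmn.symm.coprime_dvd_left he), Nat.gcd_eq_left hd]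
  have hinj : Set.InjOn (fun x : (_ : ℕ) × ℕ => x.1 * x.2) (m.divisors.sigma T) := by
    rintro ⟨d, e⟩ hx ⟨d', e'⟩ hy (h : d * e = d' * e')
    obtain ⟨hd, he⟩ : d ∈ m.divisors ∧ e ∈ n.divisors := hmem _ hx
    obtain ⟨hd', he'⟩ : d' ∈ m.divisors ∧ e' ∈ n.divisors := hmem _ hy
    obtain rfl : d = d' := by
      rw [← hgcd (Nat.dvd_of_mem_divisors hd) (Nat.dvd_of_mem_divisors he), h,
        hgcd (Nat.dvd_of_mem_divisors hd') (Nat.dvd_of_mem_divisors he')]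
    rw [Nat.eq_of_mul_eq_mul_left (Nat.pos_of_mem_divisors hd) h]
  refine ⟨(m.divisors.sigma T).image fun x => x.1 * x.2, fun x hx => ?_, ?_⟩
  · obtain ⟨y, hy, rfl⟩ := mem_image.mp hx
    obtain ⟨hd, he⟩ := hmem y hy
    rw [Nat.mem_divisors] at hd he ⊢
    exact ⟨mul_dvd_mul hd.1 he.1, mul_ne_zero hd.2 he.2⟩
  · rw [sum_image hinj, sum_sigma]
    refine sum_congr rfl fun d hd => ?_
    rw [← hsum d hd, mul_sum]
    exact sum_congr rfl fun e he => Nat.totient_mul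
      ((hmn.coprime_dvd_left (Nat.dvd_of_mem_divisors hd)).coprime_dvd_right
        (Nat.dvd_of_mem_divisors (hT d hd he)))

theorem Nat.exists_eq_mul_add_of_le_mul_add {t B M m : ℕ} (ht : t ≤ B + 1)
    (hm : m ≤ t * M + B) : ∃ c ≤ M, ∃ r ≤ B, m = t * c + r := by
  rcases le_or_gt (m / t) M with h | h
  · refine ⟨m / t, h, m % t, ?_, (Nat.div_add_mod m t).symm⟩
    rcases t.eq_zero_or_pos with rfl | ht0
    · simpa using hm
    · have := Nat.mod_lt m ht0
      omega
  · have : t * M ≤ m := (Nat.mul_le_mul_left t h.le).trans (Nat.mul_div_le m t)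
    exact ⟨M, le_rfl, m - t * M, by omega, by omega⟩

theorem exists_sum_totient_primePow_mul_eq {p M : ℕ} (hp : p.Prime) (hpM : p ≤ M + 1) (k : ℕ)
    {m : ℕ} (hm : m ≤ p ^ k * M) :
    ∃ a : ℕ → ℕ, (∀ j, a j ≤ M) ∧ ∑ j ∈ range (k + 1), φ (p ^ j) * a j = m := by
  induction k generalizing m with
  | zero => exact ⟨fun _ => m, fun _ => by simpa using hm, by simp⟩
  | succ k ih =>
    have htot : φ (p ^ (k + 1)) = p ^ k * (p - 1) := by
      rw [Nat.totient_prime_pow_succ hp]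
    obtain ⟨c, hc, r, hr, rfl⟩ := Nat.exists_eq_mul_add_of_le_mul_add
      (t := φ (p ^ (k + 1))) (B := p ^ k * M) (m := m)
      (by rw [htot]; have := Nat.mul_le_mul_left (p ^ k) (show p - 1 ≤ M by omega); omega)
      (by rwa [htot, ← add_mul, ← mul_add_one, Nat.sub_add_cancel hp.one_le, ← pow_succ])
    obtain ⟨a, ha, hsum⟩ := ih hr
    refine ⟨Function.update a (k + 1) c, fun j => ?_, ?_⟩
    · rcases eq_or_ne j (k + 1) with rfl | hj
      · simpa using hc
      · simpa [hj] using ha j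
    · rw [sum_range_succ, Function.update_self, ← hsum, add_comm]
      congr 1
      exact sum_congr rfl fun j hj => by
        rw [Function.update_of_ne (by simp at hj; omega)]

theorem exists_sum_totient_prime_mul_eq {p M m : ℕ} (hp : p.Prime) (hpM : p ≤ M + 2)
    (hm : m ≤ p * M) :
    ∃ a : ℕ → ℕ, (∀ j, a j ≤ M) ∧ ∑ j ∈ range 2, φ (p ^ j) * a j = m := by
  obtain ⟨c, hc, r, hr, rfl⟩ := Nat.exists_eq_mul_add_of_le_mul_add
    (t := p - 1) (B := M) (m := m) (by omega) (by rwa [← add_one_mul, Nat.sub_add_cancel hp.one_le])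
  refine ⟨fun j => if j = 0 then r else c, fun j => by dsimp only; split_ifs <;> assumption, ?_⟩
  simp [sum_range_succ, Nat.totient_prime hp]
  ring

theorem Nat.dvd_pow_mul_of_not_pow_succ_dvd {p k j d M : ℕ} (hp : p.Prime) (hd : d ∣ p ^ k * M)
    (hj : ¬ p ^ (j + 1) ∣ d) : d ∣ p ^ j * M := by
  have hd0 : d ≠ 0 := by rintro rfl; exact hj (dvd_zero _)
  rw [← Nat.ordProj_mul_ordCompl_eq_self d p]
  refine mul_dvd_mul (pow_dvd_pow p ?_) ?_
  · rw [hp.pow_dvd_iff_le_factorization hd0] at hj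
    omega
  · exact ((Nat.coprime_ordCompl hp hd0).pow_left k).symm.dvd_of_dvd_mul_left
      ((Nat.ordCompl_dvd d p).trans hd)

theorem not_totientSubsetSum_of_lt {p M k j m : ℕ} (hp : p.Prime) (hlo : p ^ j * M < m)
    (hhi : m < φ (p ^ (j + 1))) : ¬ TotientSubsetSum (p ^ k * M) m := by
  rintro ⟨S, hS, rfl⟩
  by_cases h : ∃ d ∈ S, p ^ (j + 1) ∣ d
  · obtain ⟨d, hdS, hd⟩ := h
    have := (Nat.le_of_dvd (Nat.totient_pos.mpr (Nat.pos_of_mem_divisors (hS hdS)))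
      (Nat.totient_dvd_of_dvd hd)).trans (single_le_sum (fun _ _ => Nat.zero_le _) hdS)
    omega
  · push Not at h
    have hsub : S ⊆ (p ^ j * M).divisors := fun d hd => by
      obtain ⟨hdvd, hne⟩ := Nat.mem_divisors.mp (hS hd)
      exact Nat.mem_divisors.mpr ⟨Nat.dvd_pow_mul_of_not_pow_succ_dvd hp hdvd (h d hd),
        mul_ne_zero (pow_ne_zero _ hp.ne_zero) (right_ne_zero_of_mul hne)⟩
    have := (sum_le_sum_of_subset hsub).trans (Nat.sum_totient (p ^ j * M)).le
    omega

theorem totientSubsetSum_primePow_mul {p M : ℕ} (hp : p.Prime) (hcop : p.Coprime M)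
    (hM : ∀ a ≤ M, TotientSubsetSum M a) (k : ℕ) {a : ℕ → ℕ} (ha : ∀ j, a j ≤ M) :
    TotientSubsetSum (p ^ k * M) (∑ j ∈ range (k + 1), φ (p ^ j) * a j) := by
  have := totientSubsetSum_mul_of_coprime (hcop.pow_left k)
    (a := fun d => a (d.factorization p)) fun d _ => hM _ (ha _)
  simpa [Nat.sum_divisors_prime_pow hp, hp.factorization_self] using this

theorem stmt9 (M p : ℕ) (hM : 0 < M) (hMphi : PhiPractical M) (hp : p.Prime)
    (hcop : Nat.gcd p M = 1) :
    (PhiPractical (p * M) ↔ p ≤ M + 2) ∧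
    (∀ k : ℕ, 2 ≤ k → (PhiPractical (p ^ k * M) ↔ p ≤ M + 1)) := by
  simp only [phiPractical_iff_forall_totientSubsetSum] at hMphi ⊢
  have hp2 := hp.two_le
  refine ⟨⟨fun h => ?_, fun hpM m hm => ?_⟩,
    fun k hk => ⟨fun h => ?_, fun hpM m hm => ?_⟩⟩
  · by_contra! hpM
    have hle : M + 1 ≤ p * M := by nlinarith
    exact not_totientSubsetSum_of_lt (M := M) (k := 1) (j := 0) (m := M + 1) hp (by simp)
      (by simp [Nat.totient_prime hp]; omega) (by simpa using h _ hle)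
  · obtain ⟨a, ha, rfl⟩ := exists_sum_totient_prime_mul_eq hp hpM hm
    simpa using totientSubsetSum_primePow_mul hp hcop hMphi 1 ha
  · by_contra! hpM
    have hle : p * M + 1 ≤ p ^ k * M := calc
      p * M + 1 ≤ p ^ 2 * M := by nlinarith
      _ ≤ p ^ k * M := Nat.mul_le_mul_right _ (Nat.pow_le_pow_right hp.pos hk)
    have hpM' : M + 1 ≤ p - 1 := by omega
    exact not_totientSubsetSum_of_lt (j := 1) hp (by simp)
      (by rw [Nat.totient_prime_pow_succ hp]; nlinarith) (h _ hle)
  · obtain ⟨a, ha, rfl⟩ := exists_sum_totient_primePow_mul_eq hp hpM k hm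
    exact totientSubsetSum_primePow_mul hp hcop hMphi k ha
end

section
/- Let m be a λ-practical number and p a prime with gcd(p, m) = 1. If p ≤ m + 2, then the number n = pm is λ-practical. Moreover, if k ≥ 2 and p ≤ m + 1, then n = p^k·m is λ-practical. -/
open scoped Classical

/-!
Write `X^{mp} - 1 = (X^m - 1) Φ` with `Φ = ∑_{i<p} X^{mi}`. Over `𝔽_p` this is `(X^m - 1)^p`, and
divisors of every degree pass to powers. Over `𝔽_q`, `q ≠ p`, the two factors are coprime. If
`u ∣ X^m - 1` has degree `s`, then `u(X^p) ∣ (X^m - 1) Φ`, and its part dividing `X^m - 1` again has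
degree `s`, because `X ↦ X^p` is an automorphism of `𝔽_q[X]/(X^m - 1)` (`p` is invertible mod `m`).
The cofactor is a divisor of `Φ` of degree `s(p - 1)`. Multiplying these by divisors of `X^m - 1`
covers every degree up to `mp` as long as the gaps `p - 1` are at most `m + 1`. For `p^k m` one
iterates with `X^{p^j m} - 1` and `Φ(X^{p^j})`, whose gaps `(p - 1) p^j` need `p ≤ m + 1`.
-/

open Polynomial

namespace Polynomial

variable {R : Type*} [CommSemiring R]

def divisorDegrees (f : R[X]) : Set ℕ := {t | ∃ g, g ∣ f ∧ g.natDegree = t}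

theorem zero_mem_divisorDegrees (f : R[X]) : 0 ∈ f.divisorDegrees :=
  ⟨1, one_dvd f, natDegree_one⟩

theorem mul_mem_divisorDegrees_expand {f : R[X]} {t : ℕ} (ht : t ∈ f.divisorDegrees) (d : ℕ) :
    t * d ∈ (expand R d f).divisorDegrees := by
  obtain ⟨g, hg, rfl⟩ := ht
  exact ⟨expand R d g, (expand R d).toRingHom.map_dvd hg, natDegree_expand d g⟩

variable [NoZeroDivisors R] [Nontrivial R]

theorem add_mem_divisorDegrees_mul {f g : R[X]} {a b : ℕ} (ha : a ∈ f.divisorDegrees)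
    (hb : b ∈ g.divisorDegrees) : a + b ∈ (f * g).divisorDegrees := by
  by_cases hfg : f * g = 0
  · exact ⟨X ^ (a + b), hfg ▸ dvd_zero _, natDegree_X_pow _⟩
  obtain ⟨f', hf', rfl⟩ := ha
  obtain ⟨g', hg', rfl⟩ := hb
  have hfg' : f' * g' ≠ 0 := fun h => hfg (zero_dvd_iff.mp (h ▸ mul_dvd_mul hf' hg'))
  exact ⟨f' * g', mul_dvd_mul hf' hg', natDegree_mul (left_ne_zero_of_mul hfg')
    (right_ne_zero_of_mul hfg')⟩

theorem Iic_add_subset_divisorDegrees_mul {f g : R[X]} {a b : ℕ}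
    (ha : Set.Iic a ⊆ f.divisorDegrees) (hb : Set.Iic b ⊆ g.divisorDegrees) :
    Set.Iic (a + b) ⊆ (f * g).divisorDegrees := by
  intro t ht
  rw [← Nat.add_sub_of_le (min_le_left t a)]
  exact add_mem_divisorDegrees_mul (ha (min_le_right t a))
    (hb (by simp only [Set.mem_Iic] at ht ⊢; omega))

theorem Iic_mul_subset_divisorDegrees_pow {f : R[X]} {n : ℕ}
    (hf : Set.Iic n ⊆ f.divisorDegrees) (k : ℕ) : Set.Iic (k * n) ⊆ (f ^ k).divisorDegrees := by
  induction k with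
  | zero =>
    intro t ht
    rw [zero_mul, Set.mem_Iic, Nat.le_zero] at ht
    rw [ht]
    exact zero_mem_divisorDegrees _
  | succ k ih => rw [add_one_mul, pow_succ]; exact Iic_add_subset_divisorDegrees_mul ih hf

theorem X_pow_sub_one_ne_zero {R : Type*} [Ring R] [Nontrivial R] {m : ℕ} (hm : m ≠ 0) :
    (X ^ m - 1 : R[X]) ≠ 0 := by
  simpa using X_pow_sub_C_ne_zero (R := R) (Nat.pos_of_ne_zero hm) 1

end Polynomial

theorem isCoprime_sub_one_geom_sum {R : Type*} [CommRing R] (x : R) {k : ℕ}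
    (hk : IsUnit (k : R)) : IsCoprime (x - 1) (∑ i ∈ Finset.range k, x ^ i) := by
  have hdvd : x - 1 ∣ ∑ i ∈ Finset.range k, x ^ i - k := by
    have : ∑ i ∈ Finset.range k, x ^ i - k = ∑ i ∈ Finset.range k, (x ^ i - 1) := by
      simp [Finset.sum_sub_distrib]
    rw [this]
    exact Finset.dvd_sum fun i _ => by simpa using sub_dvd_pow_sub_pow x 1 i
  obtain ⟨q, hq⟩ := hdvd
  rw [← sub_add_cancel (∑ i ∈ Finset.range k, x ^ i) k, hq, add_comm]
  exact (isCoprime_one_right.of_isCoprime_of_dvd_right hk.dvd).add_mul_left_right q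

theorem exists_le_mul_le_le_mul_add {m c M t : ℕ} (hc : c ≤ M + 1) (ht : t ≤ m * c + M) :
    ∃ s ≤ m, s * c ≤ t ∧ t ≤ s * c + M := by
  rcases le_total m (t / c) with hmt | htm
  · exact ⟨m, le_rfl, (Nat.mul_le_mul_right c hmt).trans (Nat.div_mul_le_self t c), ht⟩
  refine ⟨t / c, htm, Nat.div_mul_le_self t c, ?_⟩
  have hmod : t % c ≤ M := by
    rcases Nat.eq_zero_or_pos c with rfl | hc₀
    · simpa using ht
    · have := Nat.mod_lt t hc₀; omega
  have := Nat.div_add_mod' t c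
  omega

section Field

variable {F : Type*} [Field F]

open AdjoinRoot

theorem finrank_quotient_span_mk_of_dvd {P v : F[X]} (hv : v ∣ P) :
    Module.finrank F (AdjoinRoot P ⧸ Ideal.span {mk P v}) = v.natDegree := by
  have hmap : Ideal.span {Ideal.Quotient.mk (Ideal.span {P}) v} =
      (Ideal.span {v}).map (Ideal.Quotient.mkₐ F (Ideal.span {P})) := by
    rw [Ideal.map_span, Set.image_singleton]; rfl
  have hsup : Ideal.span {P} ⊔ Ideal.span {v} = Ideal.span {v} :=
    sup_eq_right.mpr (Ideal.span_singleton_le_span_singleton.mpr hv)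
  let e : ((F[X] ⧸ Ideal.span {P}) ⧸ Ideal.span {Ideal.Quotient.mk (Ideal.span {P}) v}) ≃ₐ[F]
      F[X] ⧸ Ideal.span {v} :=
    (Ideal.quotientEquivAlgOfEq F hmap).trans
      ((DoubleQuot.quotQuotEquivQuotSupₐ F _ _).trans (Ideal.quotientEquivAlgOfEq F hsup))
  exact e.toLinearEquiv.finrank_eq.trans finrank_quotient_span_eq_natDegree

theorem root_X_pow_sub_one_pow (m : ℕ) : root (X ^ m - 1 : F[X]) ^ m = 1 := by
  have h := mk_self (f := (X ^ m - 1 : F[X]))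
  rwa [map_sub, map_pow, mk_X, map_one, sub_eq_zero] at h

noncomputable def rootPowAlgHom (m k : ℕ) :
    AdjoinRoot (X ^ m - 1 : F[X]) →ₐ[F] AdjoinRoot (X ^ m - 1 : F[X]) :=
  liftAlgHom _ (Algebra.ofId F _) (root _ ^ k) (by
    simp only [eval₂_sub, eval₂_X_pow, eval₂_one]
    rw [← pow_mul, mul_comm, pow_mul, root_X_pow_sub_one_pow, one_pow, sub_self])

theorem rootPowAlgHom_mk (m k : ℕ) (v : F[X]) :
    rootPowAlgHom m k (mk _ v) = mk _ (expand F k v) := by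
  rw [rootPowAlgHom, liftAlgHom_mk, ← aeval_eq, expand_aeval]; rfl

theorem rootPowAlgHom_comp (m a b : ℕ) :
    (rootPowAlgHom (F := F) m a).comp (rootPowAlgHom m b) = rootPowAlgHom m (a * b) := by
  ext
  simp [rootPowAlgHom, liftAlgHom_root, ← pow_mul]

theorem rootPowAlgHom_eq_id {m k : ℕ} (h : k ≡ 1 [MOD m]) :
    rootPowAlgHom (F := F) m k = AlgHom.id F _ := by
  ext
  rw [rootPowAlgHom, liftAlgHom_root, AlgHom.id_apply, pow_eq_pow_mod k (root_X_pow_sub_one_pow m),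
    h, ← pow_eq_pow_mod 1 (root_X_pow_sub_one_pow m), pow_one]

theorem exists_algEquiv_mk_eq_mk_expand {m k : ℕ} (hm : m ≠ 0) (hk : k.Coprime m) :
    ∃ e : AdjoinRoot (X ^ m - 1 : F[X]) ≃ₐ[F] AdjoinRoot (X ^ m - 1 : F[X]),
      ∀ v, e (mk _ v) = mk _ (expand F k v) := by
  obtain ⟨k', -, hkk'⟩ := Nat.exists_mul_mod_eq_of_coprime 1 hk hm
  have hinv : (rootPowAlgHom (F := F) m k).comp (rootPowAlgHom m k') = AlgHom.id F _ := by
    rw [rootPowAlgHom_comp, rootPowAlgHom_eq_id hkk']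
  have hinv' : (rootPowAlgHom (F := F) m k').comp (rootPowAlgHom m k) = AlgHom.id F _ := by
    rw [rootPowAlgHom_comp, mul_comm, rootPowAlgHom_eq_id hkk']
  exact ⟨AlgEquiv.ofAlgHom _ _ hinv hinv', rootPowAlgHom_mk m k⟩

theorem natDegree_eq_of_expand_eq_mul {m p : ℕ} (hm : m ≠ 0) (hp : p.Coprime m)
    {u g₁ g₂ : F[X]} (hu : u ∣ X ^ m - 1) (hg₁ : g₁ ∣ X ^ m - 1) (hg₂ : IsCoprime g₂ (X ^ m - 1))
    (h : expand F p u = g₁ * g₂) : g₁.natDegree = u.natDegree := by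
  obtain ⟨e, he⟩ := exists_algEquiv_mk_eq_mk_expand (F := F) hm hp
  have hunit : IsUnit (mk (X ^ m - 1 : F[X]) g₂) := by
    obtain ⟨a, b, hab⟩ := hg₂
    refine IsUnit.of_mul_eq_one_right (mk _ a) ?_
    rw [← map_mul, ← sub_eq_zero, ← map_one (mk _), ← map_sub, mk_eq_zero]
    exact ⟨-b, by linear_combination hab⟩
  have hspan : Ideal.span {mk _ (expand F p u)} =
      (Ideal.span {mk (X ^ m - 1 : F[X]) u}).map
        (e : AdjoinRoot (X ^ m - 1 : F[X]) →+* AdjoinRoot (X ^ m - 1 : F[X])) := by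
    rw [Ideal.map_span, Set.image_singleton, ← he]; rfl
  calc g₁.natDegree
      = Module.finrank F (AdjoinRoot (X ^ m - 1 : F[X]) ⧸ Ideal.span {mk _ g₁}) :=
        (finrank_quotient_span_mk_of_dvd hg₁).symm
    _ = Module.finrank F (AdjoinRoot (X ^ m - 1 : F[X]) ⧸ Ideal.span {mk _ (expand F p u)}) := by
        rw [h, map_mul, Ideal.span_singleton_mul_right_unit hunit]
    _ = Module.finrank F (AdjoinRoot (X ^ m - 1 : F[X]) ⧸ Ideal.span {mk _ u}) :=
        (Ideal.quotientEquivAlg _ _ e hspan).toLinearEquiv.finrank_eq.symm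
    _ = u.natDegree := finrank_quotient_span_mk_of_dvd hu

theorem mul_sub_one_mem_divisorDegrees_geom_sum {m p s : ℕ} (hm : m ≠ 0) (hpm : p.Coprime m)
    (hpF : (p : F) ≠ 0) (hs : s ∈ (X ^ m - 1 : F[X]).divisorDegrees) :
    s * (p - 1) ∈ (∑ i ∈ Finset.range p, (X ^ m : F[X]) ^ i).divisorDegrees := by
  obtain ⟨u, hu, rfl⟩ := hs
  have hcop : IsCoprime (X ^ m - 1 : F[X]) (∑ i ∈ Finset.range p, (X ^ m : F[X]) ^ i) :=
    isCoprime_sub_one_geom_sum _ (by rw [← map_natCast C]; exact isUnit_C.mpr hpF.isUnit)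
  have hexp : expand F p u ∣ (X ^ m - 1) * ∑ i ∈ Finset.range p, (X ^ m : F[X]) ^ i := by
    rw [mul_geom_sum, ← pow_mul, mul_comm]
    simpa [← pow_mul] using map_dvd (expand F p) hu
  obtain ⟨g₁, g₂, hg₁, hg₂, hsplit⟩ := exists_dvd_and_dvd_of_dvd_mul hexp
  have hdeg₁ := natDegree_eq_of_expand_eq_mul hm hpm hu hg₁
    (hcop.symm.of_isCoprime_of_dvd_left hg₂) hsplit
  have hu₀ : u ≠ 0 := by
    rintro rfl
    exact X_pow_sub_one_ne_zero hm (zero_dvd_iff.mp hu)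
  have hp : 0 < p := Nat.pos_of_ne_zero (by rintro rfl; exact hpF Nat.cast_zero)
  have hne : g₁ * g₂ ≠ 0 := hsplit ▸ (expand_ne_zero hp).mpr hu₀
  refine ⟨g₂, hg₂, ?_⟩
  have hdeg := congrArg natDegree hsplit
  rw [natDegree_expand, natDegree_mul (left_ne_zero_of_mul hne) (right_ne_zero_of_mul hne),
    hdeg₁] at hdeg
  rw [Nat.mul_sub_one]
  omega

theorem Iic_subset_divisorDegrees_X_pow_mul_sub_one {m p d : ℕ} (hm : m ≠ 0) (hpm : p.Coprime m)
    (hpF : (p : F) ≠ 0) (hpd : (p - 1) * d ≤ d * m + 1)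
    (hbase : Set.Iic m ⊆ (X ^ m - 1 : F[X]).divisorDegrees)
    (hdm : Set.Iic (d * m) ⊆ (X ^ (d * m) - 1 : F[X]).divisorDegrees) :
    Set.Iic (d * m * p) ⊆ (X ^ (d * m * p) - 1 : F[X]).divisorDegrees := by
  intro t ht
  have hp : p ≠ 0 := by rintro rfl; exact hpF Nat.cast_zero
  have ht' : t ≤ m * ((p - 1) * d) + d * m := by
    have : d * m * p = m * ((p - 1) * d) + d * m := by
      obtain ⟨p, rfl⟩ := Nat.exists_eq_add_one_of_ne_zero hp
      rw [Nat.add_sub_cancel]; ring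
    exact this ▸ ht
  obtain ⟨s, hs, hst, hts⟩ := exists_le_mul_le_le_mul_add hpd ht'
  have hgeom : expand F d (∑ i ∈ Finset.range p, (X ^ m : F[X]) ^ i) =
      ∑ i ∈ Finset.range p, (X ^ (d * m) : F[X]) ^ i := by
    simp [map_sum, pow_mul]
  have hgeomDeg := mul_mem_divisorDegrees_expand
    (mul_sub_one_mem_divisorDegrees_geom_sum hm hpm hpF (hbase hs)) d
  rw [hgeom] at hgeomDeg
  have := add_mem_divisorDegrees_mul (hdm (show t - s * ((p - 1) * d) ≤ d * m by omega)) hgeomDeg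
  rwa [mul_geom_sum, ← pow_mul, mul_assoc s, Nat.sub_add_cancel hst] at this

end Field

theorem Iic_subset_divisorDegrees_X_pow_prime_pow_mul_sub_one {R : Type*} [CommRing R] [IsDomain R]
    (p : ℕ) [Fact p.Prime] [CharP R p] {m : ℕ}
    (h : Set.Iic m ⊆ (X ^ m - 1 : R[X]).divisorDegrees) (k : ℕ) :
    Set.Iic (p ^ k * m) ⊆ (X ^ (p ^ k * m) - 1 : R[X]).divisorDegrees := by
  rw [mul_comm, pow_mul, ← one_pow (p ^ k), ← sub_pow_char_pow, mul_comm]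
  exact Iic_mul_subset_divisorDegrees_pow h _

theorem pPractical_iff {p n : ℕ} :
    PPractical p n ↔ Set.Iic n ⊆ (X ^ n - 1 : (ZMod p)[X]).divisorDegrees := by
  refine ⟨fun h t ht => ?_, fun h t _ ht => h ht⟩
  rcases Nat.eq_zero_or_pos t with rfl | ht₀
  · exact zero_mem_divisorDegrees _
  · exact h t ht₀ ht

theorem PPractical.prime_pow_mul {p m : ℕ} (hp : p.Prime) (h : PPractical p m) (k : ℕ) :
    PPractical p (p ^ k * m) := by
  have := Fact.mk hp
  rw [pPractical_iff] at h ⊢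
  exact Iic_subset_divisorDegrees_X_pow_prime_pow_mul_sub_one p h k

theorem PPractical.mul_prime {q p m d : ℕ} (hq : q.Prime) (hp : p.Prime) (hqp : q ≠ p)
    (hpm : p.Coprime m) (hm : m ≠ 0) (hpd : (p - 1) * d ≤ d * m + 1) (hbase : PPractical q m)
    (hd : PPractical q (d * m)) : PPractical q (d * m * p) := by
  have := Fact.mk hq
  have hpF : (p : ZMod q) ≠ 0 := by
    rw [Ne, ZMod.natCast_eq_zero_iff]
    exact fun h => hqp ((Nat.prime_dvd_prime_iff_eq hq hp).mp h)
  rw [pPractical_iff] at hbase hd ⊢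
  exact Iic_subset_divisorDegrees_X_pow_mul_sub_one hm hpm hpF hpd hbase hd

theorem stmt10_general (m p : ℕ) (hml : LambdaPractical m) (hp : p.Prime)
    (hcop : Nat.gcd p m = 1) :
    (p ≤ m + 2 → LambdaPractical (p * m)) ∧
    (∀ k : ℕ, 2 ≤ k → p ≤ m + 1 → LambdaPractical (p ^ k * m)) := by
  have hm : m ≠ 0 := by
    rintro rfl
    exact hp.ne_one (by simpa using hcop)
  have hstep : ∀ q, q.Prime → q ≠ p → ∀ d, (p - 1) * d ≤ d * m + 1 →
      PPractical q (d * m) → PPractical q (d * m * p) := fun q hq hqp d hpd hd =>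
    PPractical.mul_prime hq hp hqp hcop hm hpd (hml q hq) hd
  refine ⟨fun hpm q hq => ?_, ?_⟩
  · obtain rfl | hqp := eq_or_ne q p
    · simpa using (hml q hq).prime_pow_mul hq 1
    · simpa [mul_comm] using hstep q hq hqp 1 (by omega) (by simpa using hml q hq)
  rintro k - hpm q hq
  obtain rfl | hqp := eq_or_ne q p
  · exact (hml q hq).prime_pow_mul hq k
  induction k with
  | zero => simpa using hml q hq
  | succ k ih =>
    rw [pow_succ, mul_right_comm]
    have hpd : (p - 1) * p ^ k ≤ m * p ^ k := Nat.mul_le_mul_right _ (by omega)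
    exact hstep q hq hqp _ (by rw [mul_comm m] at hpd; omega) ih

theorem stmt10 (m p : ℕ) (hm : 0 < m) (hml : LambdaPractical m) (hp : p.Prime)
    (hcop : Nat.gcd p m = 1) :
    (p ≤ m + 2 → LambdaPractical (p * m)) ∧
    (∀ k : ℕ, 2 ≤ k → p ≤ m + 1 → LambdaPractical (p ^ k * m)) :=
  stmt10_general m p hml hp hcop
end

section
/- Let n be an even positive integer. Then the following are equivalent: n is weakly φ-practical; n is φ-practical; n is λ-practical. -/
open scoped Classical

/-!
Write `smoothPart n k = ∏_{r < k} r^{v_r(n)}`. Since `X^n - 1 = ∏_{d ∣ n} Φ_d`, `n` is φ-practical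
as soon as every `m ≤ n` is a sum of `φ(d)` over distinct divisors `d ∣ n`. This property passes
from `a` to `a q^e` when `q ∤ a` and `q ≤ a + 1`, so it climbs along `smoothPart n k`, `k ≤ n + 1`,
provided `q ≤ smoothPart n q + 1` for every prime `q ∣ n`; for even `n` this follows from weak
φ-practicality, because `smoothPart n q` is even when `q` is odd.

φ-practical implies λ-practical by reducing mod `p`: a divisor of the monic `X^n - 1` keeps its
degree.

Conversely, suppose `q ∣ n` with `q > smoothPart n q + 2 =: m + 2`. By Dirichlet's theorem there
is a prime `p > n` which is a primitive root modulo every prime `s ≥ q` dividing `n`. Over `𝔽_p`,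
`X^n - 1` is squarefree, so a divisor of degree `m + 1` has an irreducible factor `f` not dividing
`X^m - 1`. The order of a root of `f` divides `n` but not `m`, hence is divisible by such a prime
`s`, and then `s - 1 = ord_s(p)` divides `deg f ≤ m + 1 < q - 1`, which is absurd.
-/

open Finset Polynomial

theorem Nat.exists_le_eq_add_mul {A K n m : ℕ} (hK : K ≤ A) (hm : m ≤ A + n * K) :
    ∃ s ≤ n, ∃ r ≤ A, m = r + s * K := by
  by_cases hs : m / K ≤ n
  · refine ⟨m / K, hs, m % K, ?_, (Nat.mod_add_div' m K).symm⟩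
    rcases K.eq_zero_or_pos with rfl | hK0
    · simpa using hm
    · exact (Nat.mod_lt m hK0).le.trans hK
  · have : n * K ≤ m :=
      (Nat.mul_le_mul_right K (not_le.mp hs).le).trans (Nat.div_mul_le_self m K)
    exact ⟨n, le_rfl, m - n * K, by omega, by omega⟩

namespace Nat

def smoothPart (n k : ℕ) : ℕ := ∏ r ∈ n.primeFactors.filter (· < k), r ^ n.factorization r

theorem smoothPart_pos (n k : ℕ) : 0 < smoothPart n k :=
  prod_pos fun _ hr => pow_pos (prime_of_mem_primeFactors (mem_filter.mp hr).1).pos _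

theorem smoothPart_zero (n : ℕ) : smoothPart n 0 = 1 := by
  simp [smoothPart]

theorem smoothPart_succ (n k : ℕ) :
    smoothPart n (k + 1) = smoothPart n k * k ^ n.factorization k := by
  have hk : k ^ n.factorization k =
      ∏ r ∈ n.primeFactors, if r = k then r ^ n.factorization r else 1 := by
    rw [prod_ite_eq']
    split_ifs with hk
    · rfl
    · rw [Finsupp.notMem_support_iff.mp (by simpa using hk), pow_zero]
  rw [hk, smoothPart, smoothPart, prod_filter, prod_filter, ← prod_mul_distrib]
  refine prod_congr rfl fun r _ => ?_
  split_ifs <;> omega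

theorem smoothPart_eq_self {n k : ℕ} (hn : n ≠ 0) (hk : n < k) : smoothPart n k = n := by
  rw [smoothPart, filter_true_of_mem fun r hr => (le_of_mem_primeFactors hr).trans_lt hk,
    ← prod_primeFactors_pow_factorization hn]

theorem smoothPart_dvd (n k : ℕ) : smoothPart n k ∣ n := by
  rcases eq_or_ne n 0 with rfl | hn
  · exact dvd_zero _
  conv_rhs => rw [prod_primeFactors_pow_factorization hn]
  exact prod_dvd_prod_of_subset _ _ _ (filter_subset _ _)

theorem Prime.not_dvd_smoothPart {q : ℕ} (hq : q.Prime) (n : ℕ) : ¬ q ∣ smoothPart n q := by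
  rw [smoothPart, hq.prime.dvd_finsetProd_iff]
  rintro ⟨r, hr, hqr⟩
  obtain ⟨hr, hrq⟩ := mem_filter.mp hr
  have := (prime_dvd_prime_iff_eq hq (prime_of_mem_primeFactors hr)).mp (hq.dvd_of_dvd_pow hqr)
  omega

theorem dvd_smoothPart {d n k : ℕ} (hn : n ≠ 0) (hd : d ∣ n)
    (hlt : ∀ s, s.Prime → s ∣ d → s < k) : d ∣ smoothPart n k := by
  have hd0 : d ≠ 0 := ne_zero_of_dvd_ne_zero hn hd
  rw [prod_primeFactors_pow_factorization hd0]
  calc ∏ r ∈ d.primeFactors, r ^ d.factorization r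
      ∣ ∏ r ∈ d.primeFactors, r ^ n.factorization r :=
        prod_dvd_prod_of_dvd _ _ fun r _ =>
          pow_dvd_pow r ((factorization_le_iff_dvd hd0 hn).mpr hd r)
    _ ∣ smoothPart n k := by
        refine prod_dvd_prod_of_subset _ _ _ fun r hr => mem_filter.mpr ⟨?_, ?_⟩
        · exact primeFactors_mono hd hn hr
        · exact hlt r (prime_of_mem_primeFactors hr) (dvd_of_mem_primeFactors hr)

end Nat

def TotientPractical (n : ℕ) : Prop :=
  ∀ m ≤ n, ∃ S ⊆ n.divisors, ∑ d ∈ S, Nat.totient d = m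

namespace TotientPractical

theorem one : TotientPractical 1 := by
  intro m hm
  interval_cases m
  · exact ⟨∅, by simp⟩
  · exact ⟨{1}, by simp⟩

theorem mul_prime_pow_succ {n q e : ℕ} (hn : TotientPractical n)
    (hnq : TotientPractical (n * q ^ e)) (hq : q.Prime) (hqn : ¬ q ∣ n) (hqle : q ≤ n + 1) :
    TotientPractical (n * q ^ (e + 1)) := by
  have hcop : n.Coprime (q ^ (e + 1)) := ((hq.coprime_iff_not_dvd.mpr hqn).pow_left _).symm
  have htot : (q ^ (e + 1)).totient = (q - 1) * q ^ e := by
    rw [Nat.totient_prime_pow_succ hq, mul_comm]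
  intro m hm
  -- `r` is covered by divisors of `n q^e`, `s` by the divisors `d ∣ n`, each scaled to `d q^(e+1)`.
  obtain ⟨s, hs, r, hr, rfl⟩ : ∃ s ≤ n, ∃ r ≤ n * q ^ e, m = r + s * (q ^ (e + 1)).totient := by
    refine Nat.exists_le_eq_add_mul ?_ ?_
    · rw [htot]; exact Nat.mul_le_mul_right _ (by omega)
    · calc m ≤ n * q ^ (e + 1) := hm
        _ = n * q ^ e + n * ((q - 1) * q ^ e) := by
          zify [hq.one_le]; ring
        _ = _ := by rw [htot]
  obtain ⟨S, hSn, rfl⟩ := hn s hs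
  obtain ⟨R, hRn, rfl⟩ := hnq r hr
  have hpos : 0 < q ^ (e + 1) := pow_pos hq.pos _
  have hn0 : n ≠ 0 := by have := hq.two_le; omega
  have hdisj : Disjoint R (S.image (· * q ^ (e + 1))) := by
    refine disjoint_left.mpr fun x hxR hxS => ?_
    obtain ⟨d, -, rfl⟩ := mem_image.mp hxS
    have : q ^ (e + 1) ∣ n * q ^ e :=
      (dvd_mul_left _ d).trans (Nat.dvd_of_mem_divisors (hRn hxR))
    exact absurd (Nat.le_of_dvd (pow_pos hq.pos e) (hcop.symm.dvd_of_dvd_mul_left this))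
      (Nat.pow_lt_pow_succ hq.one_lt).not_ge
  refine ⟨R ∪ S.image (· * q ^ (e + 1)), union_subset ?_ ?_, ?_⟩
  · exact hRn.trans (Nat.divisors_subset_of_dvd (by positivity)
      (mul_dvd_mul_left n (pow_dvd_pow q e.le_succ)))
  · intro x hx
    obtain ⟨d, hd, rfl⟩ := mem_image.mp hx
    exact Nat.mem_divisors.mpr
      ⟨mul_dvd_mul_right (Nat.dvd_of_mem_divisors (hSn hd)) _, by positivity⟩
  · rw [sum_union hdisj, sum_image fun a _ b _ h => Nat.eq_of_mul_eq_mul_right hpos h, sum_mul]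
    congr 1
    exact sum_congr rfl fun d hd =>
      Nat.totient_mul (hcop.coprime_dvd_left (Nat.dvd_of_mem_divisors (hSn hd)))

theorem mul_prime_pow {n q : ℕ} (hn : TotientPractical n) (hq : q.Prime) (hqn : ¬ q ∣ n)
    (hqle : q ≤ n + 1) (e : ℕ) : TotientPractical (n * q ^ e) := by
  induction e with
  | zero => simpa using hn
  | succ e ih => exact hn.mul_prime_pow_succ ih hq hqn hqle

theorem phiPractical {n : ℕ} (hn : 0 < n) (h : TotientPractical n) :
    PhiPractical n := by
  intro m _ hm
  obtain ⟨S, hS, rfl⟩ := h m hm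
  refine ⟨∏ d ∈ S, cyclotomic d ℤ, ?_, ?_⟩
  · rw [← prod_cyclotomic_eq_X_pow_sub_one hn ℤ]
    exact prod_dvd_prod_of_subset S _ _ hS
  · rw [natDegree_prod _ _ fun d _ => cyclotomic_ne_zero d ℤ]
    simp only [natDegree_cyclotomic]

end TotientPractical

theorem totientPractical_of_forall_le_smoothPart_add_one {n : ℕ} (hn : n ≠ 0)
    (h : ∀ q, q.Prime → q ∣ n → q ≤ Nat.smoothPart n q + 1) : TotientPractical n := by
  suffices ∀ k, TotientPractical (Nat.smoothPart n k) by
    simpa [Nat.smoothPart_eq_self hn n.lt_succ_self] using this (n + 1)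
  intro k
  induction k with
  | zero => simpa [Nat.smoothPart_zero] using TotientPractical.one
  | succ k ih =>
    rw [Nat.smoothPart_succ]
    by_cases hk : k ∈ n.primeFactors
    · obtain ⟨hkp, hkn, -⟩ := Nat.mem_primeFactors.mp hk
      exact ih.mul_prime_pow hkp (hkp.not_dvd_smoothPart n) (h k hkp hkn) _
    · rw [Finsupp.notMem_support_iff.mp (by simpa using hk), pow_zero, mul_one]
      exact ih

theorem WeaklyPhiPractical.le_smoothPart_add_one {n : ℕ} (h : WeaklyPhiPractical n)
    (heven : 2 ∣ n) {q : ℕ} (hq : q.Prime) (hqn : q ∣ n) : q ≤ Nat.smoothPart n q + 1 := by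
  have hle : q ≤ Nat.smoothPart n q + 2 := h.2 q hq hqn
  rcases hq.eq_two_or_odd with rfl | hodd
  · have := Nat.smoothPart_pos n 2
    omega
  · have h2 : 2 ∣ Nat.smoothPart n q := Nat.dvd_smoothPart h.1.ne' heven fun s hs hs2 => by
      rw [(Nat.prime_dvd_prime_iff_eq hs Nat.prime_two).mp hs2]
      have := hq.two_le; omega
    omega

theorem PhiPractical.pPractical {n : ℕ} (h : PhiPractical n) (p : ℕ) [Nontrivial (ZMod p)] :
    PPractical p n := by
  intro m hm1 hmn
  obtain ⟨g, hg, rfl⟩ := h m hm1 hmn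
  have hmonic : (X ^ n - 1 : ℤ[X]).Monic := by simpa using monic_X_pow_sub_C (1 : ℤ) (by omega)
  refine ⟨g.map (Int.castRingHom (ZMod p)),
    by simpa using Polynomial.map_dvd (Int.castRingHom (ZMod p)) hg, ?_⟩
  exact natDegree_map_eq_of_isUnit_leadingCoeff _ (hmonic.isUnit_leadingCoeff_of_dvd hg)

theorem PhiPractical.lambdaPractical {n : ℕ} (h : PhiPractical n) : LambdaPractical n :=
  fun p hp => have := Fact.mk hp; h.pPractical p

theorem AdjoinRoot.root_pow_eq_one_iff {R : Type*} [CommRing R] {h : R[X]} {m : ℕ} :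
    AdjoinRoot.root h ^ m = 1 ↔ h ∣ X ^ m - 1 := by
  rw [← AdjoinRoot.mk_eq_zero, map_sub, map_pow, map_one, AdjoinRoot.mk_X, sub_eq_zero]

theorem AdjoinRoot.orderOf_root_dvd_card_pow_sub_one {F : Type*} [Field F] [Fintype F] {h : F[X]}
    [Fact (Irreducible h)] (hroot : AdjoinRoot.root h ≠ 0) :
    orderOf (AdjoinRoot.root h) ∣ Fintype.card F ^ h.natDegree - 1 := by
  let pb := AdjoinRoot.powerBasis (Fact.out : Irreducible h).ne_zero
  have : Module.Finite F (AdjoinRoot h) := pb.finite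
  have : Finite (AdjoinRoot h) := Module.finite_of_finite F
  have : Fintype (AdjoinRoot h) := Fintype.ofFinite _
  have hrank : Module.finrank F (AdjoinRoot h) = h.natDegree := pb.finrank
  apply orderOf_dvd_of_pow_eq_one
  rw [← hrank, ← Module.card_eq_pow_finrank]
  exact FiniteField.pow_card_sub_one_eq_one _ hroot

theorem Nat.Prime.exists_orderOf_natCast_eq {s : ℕ} (hs : s.Prime) :
    ∃ a : ℕ, orderOf (a : ZMod s) = s - 1 := by
  have := Fact.mk hs
  obtain ⟨g, hg⟩ := IsCyclic.exists_ofOrder_eq_natCard (α := (ZMod s)ˣ)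
  refine ⟨(g : ZMod s).val, ?_⟩
  rw [ZMod.natCast_zmod_val, orderOf_units, hg, Nat.card_eq_fintype_card, ZMod.card_units]

theorem exists_prime_gt_forall_orderOf_natCast_eq (T : Finset ℕ) (hT : ∀ s ∈ T, s.Prime)
    (N : ℕ) : ∃ p > N, p.Prime ∧ ∀ s ∈ T, orderOf (p : ZMod s) = s - 1 := by
  have : ∀ s, ∃ a : ℕ, s.Prime → orderOf (a : ZMod s) = s - 1 := fun s => by
    by_cases hs : s.Prime
    · exact hs.exists_orderOf_natCast_eq.imp fun _ h _ => h
    · exact ⟨0, (absurd · hs)⟩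
  choose a ha using this
  obtain ⟨k, hk⟩ := Nat.chineseRemainderOfFinset a id T (fun s hs => (hT s hs).ne_zero)
    fun s hs t ht hst => (Nat.coprime_primes (hT s hs) (hT t ht)).mpr hst
  have hk' : ∀ s ∈ T, orderOf (k : ZMod s) = s - 1 := fun s hs => by
    rw [(ZMod.natCast_eq_natCast_iff _ _ _).mpr (hk s hs), ha s (hT s hs)]
  have hunit : IsUnit (k : ZMod (∏ s ∈ T, s)) := by
    refine (ZMod.isUnit_iff_coprime _ _).mpr (Nat.Coprime.prod_right fun s hs => ?_)
    refine ((hT s hs).coprime_iff_not_dvd.mpr fun hsk => ?_).symm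
    have := Fact.mk (hT s hs)
    have := hk' s hs
    rw [(ZMod.natCast_eq_zero_iff k s).mpr hsk, orderOf_zero] at this
    have := (hT s hs).two_le
    omega
  have : NeZero (∏ s ∈ T, s) := ⟨prod_ne_zero_iff.mpr fun s hs => (hT s hs).ne_zero⟩
  obtain ⟨p, hpN, hp, hpk⟩ := Nat.forall_exists_prime_gt_and_eq_mod hunit N
  refine ⟨p, hpN, hp, fun s hs => ?_⟩
  rw [← hk' s hs, (ZMod.natCast_eq_natCast_iff _ _ _).mpr
    (((ZMod.natCast_eq_natCast_iff _ _ _).mp hpk).of_dvd (dvd_prod_of_mem id hs))]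

theorem Polynomial.exists_irreducible_dvd_not_dvd {K : Type*} [Field K] {g u : K[X]}
    (hg : Squarefree g) (hu : u ≠ 0) (hdeg : u.natDegree < g.natDegree) :
    ∃ f, Irreducible f ∧ f ∣ g ∧ ¬ f ∣ u := by
  obtain ⟨B, hB⟩ := gcd_dvd_left g u
  have hg0 : g ≠ 0 := by rintro rfl; simp at hdeg
  have hB0 : B ≠ 0 := fun h0 => hg0 (by rw [hB, h0, mul_zero])
  have hG0 : gcd g u ≠ 0 := fun h0 => hg0 (by rw [hB, h0, zero_mul])
  have hBunit : ¬ IsUnit B := fun hunit => by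
    have := natDegree_le_of_dvd (gcd_dvd_right g u) hu
    rw [hB, natDegree_mul hG0 hB0, natDegree_eq_zero_of_isUnit hunit] at hdeg
    omega
  obtain ⟨f, hf, hfB⟩ := WfDvdMonoid.exists_irreducible_factor hBunit hB0
  have hBg : B ∣ g := Dvd.intro_left _ hB.symm
  refine ⟨f, hf, hfB.trans hBg, fun hfu => hf.not_isUnit (hg f ?_)⟩
  rw [hB]
  exact mul_dvd_mul (dvd_gcd (hfB.trans hBg) hfu) hfB

theorem exists_prime_ge_natCast_pow_natDegree_eq_one {p n q : ℕ} [Fact p.Prime] (hn : n ≠ 0)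
    {f : (ZMod p)[X]} (hf : Irreducible f) (hfn : f ∣ X ^ n - 1)
    (hfq : ¬ f ∣ X ^ Nat.smoothPart n q - 1) :
    ∃ s, s.Prime ∧ s ∣ n ∧ q ≤ s ∧ (p : ZMod s) ^ f.natDegree = 1 := by
  have := Fact.mk hf
  have hroot : AdjoinRoot.root f ^ n = 1 := AdjoinRoot.root_pow_eq_one_iff.mpr hfn
  have hdn : orderOf (AdjoinRoot.root f) ∣ n := orderOf_dvd_of_pow_eq_one hroot
  obtain ⟨s, hs, hsd, hqs⟩ : ∃ s, s.Prime ∧ s ∣ orderOf (AdjoinRoot.root f) ∧ q ≤ s := by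
    by_contra! hlt
    exact hfq (AdjoinRoot.root_pow_eq_one_iff.mp
      (orderOf_dvd_iff_pow_eq_one.mp (Nat.dvd_smoothPart hn hdn hlt)))
  have hcard := AdjoinRoot.orderOf_root_dvd_card_pow_sub_one fun h0 => by
    rw [h0, zero_pow hn] at hroot
    exact zero_ne_one hroot
  rw [ZMod.card] at hcard
  refine ⟨s, hs, hsd.trans hdn, hqs, ?_⟩
  have := (ZMod.natCast_eq_zero_iff _ s).mpr (hsd.trans hcard)
  rwa [Nat.cast_sub (Nat.one_le_pow _ _ (Fact.out : p.Prime).pos), sub_eq_zero, Nat.cast_pow,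
    Nat.cast_one] at this

theorem LambdaPractical.weaklyPhiPractical {n : ℕ} (hn : 0 < n) (hlam : LambdaPractical n) :
    WeaklyPhiPractical n := by
  refine ⟨hn, fun q hq hqn => ?_⟩
  by_contra! hlt
  change Nat.smoothPart n q + 2 < q at hlt
  have hmn : Nat.smoothPart n q < n :=
    lt_of_le_of_ne (Nat.le_of_dvd hn (Nat.smoothPart_dvd n q))
      fun hm => hq.not_dvd_smoothPart n (by rwa [hm])
  set m := Nat.smoothPart n q
  obtain ⟨p, hpn, hp, hord⟩ := exists_prime_gt_forall_orderOf_natCast_eq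
    (n.primeFactors.filter (q ≤ ·))
    (fun s hs => Nat.prime_of_mem_primeFactors (mem_filter.mp hs).1) n
  have := Fact.mk hp
  obtain ⟨g, hgn, hgdeg⟩ := hlam p hp (m + 1) (by omega) hmn
  have hsqf : Squarefree (X ^ n - 1 : (ZMod p)[X]) := by
    have hpn : (n : ZMod p) ≠ 0 := by
      rw [Ne, ZMod.natCast_eq_zero_iff]
      exact fun hpn' => by have := Nat.le_of_dvd hn hpn'; omega
    simpa using (separable_X_pow_sub_C (1 : ZMod p) hpn one_ne_zero).squarefree
  have hXm : (X ^ m - 1 : (ZMod p)[X]).Monic := by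
    simpa using monic_X_pow_sub_C (1 : ZMod p) (Nat.smoothPart_pos n q).ne'
  have hXdeg : (X ^ m - 1 : (ZMod p)[X]).natDegree = m := by
    simpa using natDegree_X_pow_sub_C (n := m) (r := (1 : ZMod p))
  obtain ⟨f, hf, hfg, hfm⟩ := exists_irreducible_dvd_not_dvd (hsqf.squarefree_of_dvd hgn)
    hXm.ne_zero (by omega)
  obtain ⟨s, hs, hsn, hqs, hps⟩ :=
    exists_prime_ge_natCast_pow_natDegree_eq_one hn.ne' hf (hfg.trans hgn) hfm
  have hdvd : s - 1 ∣ f.natDegree := by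
    rw [← hord s (mem_filter.mpr ⟨Nat.mem_primeFactors.mpr ⟨hs, hsn, hn.ne'⟩, hqs⟩)]
    exact orderOf_dvd_of_pow_eq_one hps
  have := Nat.le_of_dvd hf.natDegree_pos hdvd
  have := natDegree_le_of_dvd hfg (by rintro rfl; simp at hgdeg)
  omega

theorem stmt11 (n : ℕ) (hn : 0 < n) (heven : 2 ∣ n) :
    (WeaklyPhiPractical n ↔ PhiPractical n) ∧
    (PhiPractical n ↔ LambdaPractical n) := by
  have weak_phi : WeaklyPhiPractical n → PhiPractical n := fun h =>
    (totientPractical_of_forall_le_smoothPart_add_one hn.ne' fun _ hq hqn =>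
      h.le_smoothPart_add_one heven hq hqn).phiPractical hn
  have lambda_weak : LambdaPractical n → WeaklyPhiPractical n :=
    LambdaPractical.weaklyPhiPractical hn
  exact ⟨⟨weak_phi, fun h => lambda_weak h.lambdaPractical⟩,
    ⟨PhiPractical.lambdaPractical, fun h => weak_phi (lambda_weak h)⟩⟩
end

section
/- For each prime p, there exist infinitely many positive integers n that are p-practical but not λ-practical. -/
open scoped Classical

/-!
Over `𝔽_ℓ` with `ℓ ∤ n`, the polynomial `X^n - 1` is squarefree, and an irreducible factor of
degree `d` divides both `X^n - 1` and `X^(ℓ^d - 1) - 1`, hence `X^gcd(n, ℓ^d - 1) - 1`. So if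
`gcd(n, ℓ^d - 1) ∣ D` for all `d ≤ m`, every divisor of degree `m` divides `X^D - 1`, forcing
`m ≤ D`.

For odd `p`, take `n = p^k`: over `𝔽_p` we have `X^n - 1 = (X - 1)^n`, while over `𝔽_2` the
criterion excludes degree `2` (for `p ≥ 5`) or degree `4` (for `p = 3`).

For `p = 2`, take a prime `r`, a prime `q ∣ 2^r - 1` (so `2r ∣ q - 1`) and `2^k ∈ [r, 2r - 2]`,
and `n = 2^k q`. Over `𝔽_2`, `X^n - 1 = (X^q - 1)^(2^k)` is `(X - 1)^(2^k)` times factors of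
degree at most `r ≤ 2^k + 1`, so subset sums reach every degree. For a prime `ℓ` that is a
primitive root mod `q` (Dirichlet), `q ∤ ℓ^d - 1` for `d < q - 1`, and the criterion excludes
degree `2^k + 1`.
-/

open Polynomial

theorem Multiset.exists_le_add_sum_map_eq {α : Type*} (f : α → ℕ) {B : ℕ} {s : Multiset α}
    (hs : ∀ x ∈ s, f x ≤ B + 1) {m : ℕ} (hm : m ≤ B + (s.map f).sum) :
    ∃ t ≤ s, ∃ a ≤ B, a + (t.map f).sum = m := by
  induction s using Multiset.induction_on generalizing m with
  | empty => exact ⟨0, le_rfl, m, by simpa using hm, by simp⟩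
  | cons x s ih =>
    have hs' : ∀ y ∈ s, f y ≤ B + 1 := fun y hy => hs y (mem_cons_of_mem hy)
    rw [map_cons, sum_cons] at hm
    by_cases hsmall : m ≤ B + (s.map f).sum
    · obtain ⟨t, hts, a, haB, hsum⟩ := ih hs' hsmall
      exact ⟨t, hts.trans (le_cons_self s x), a, haB, hsum⟩
    · have hx := hs x (mem_cons_self x s)
      obtain ⟨t, hts, a, haB, hsum⟩ := ih hs' (m := m - f x) (by omega)
      refine ⟨x ::ₘ t, cons_le_cons x hts, a, haB, ?_⟩
      rw [map_cons, sum_cons]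
      omega

theorem dvd_pow_gcd_sub_one {R : Type*} [CommRing R] {q x : R} {a b : ℕ}
    (ha : q ∣ x ^ a - 1) (hb : q ∣ x ^ b - 1) : q ∣ x ^ a.gcd b - 1 := by
  simp only [← Ideal.Quotient.eq_zero_iff_dvd, map_sub, map_pow, map_one, sub_eq_zero] at *
  exact pow_gcd_eq_one.mpr ⟨ha, hb⟩

theorem Squarefree.dvd_of_forall_irreducible_dvd {M : Type*} [CommMonoidWithZero M]
    [Nontrivial M] [NormalizationMonoid M] [UniqueFactorizationMonoid M] {g f : M}
    (hg : Squarefree g) (h : ∀ q, Irreducible q → q ∣ g → q ∣ f) : g ∣ f := by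
  refine (hg.isRadical.dvd_radical hg.ne_zero).trans ?_
  refine Finset.prod_dvd_of_isRelPrime UniqueFactorizationMonoid.pairwise_primeFactors_isRelPrime
    fun q hq => ?_
  rw [UniqueFactorizationMonoid.mem_primeFactors] at hq
  exact h q (UniqueFactorizationMonoid.irreducible_of_normalized_factor q hq)
    (UniqueFactorizationMonoid.dvd_of_mem_normalizedFactors hq)

theorem X_pow_sub_X_eq_X_mul {R : Type*} [Ring R] {m : ℕ} (hm : 0 < m) :
    (X ^ m - X : R[X]) = X * (X ^ (m - 1) - 1) := by
  rw [mul_sub, ← pow_succ', Nat.sub_add_cancel hm, mul_one]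

section FiniteField

variable {K : Type*} [Field K] [Finite K] {h : K[X]} {n : ℕ}

theorem Irreducible.dvd_X_pow_card_pow_natDegree_sub_one (hi : Irreducible h) (hn0 : n ≠ 0)
    (hn : h ∣ X ^ n - 1) : h ∣ X ^ (Nat.card K ^ h.natDegree - 1) - 1 := by
  have hX : ¬ h ∣ X := fun hX =>
    hi.not_isUnit (isUnit_of_dvd_one (by simpa using dvd_sub (dvd_pow hX hn0) hn))
  have hfrob := hi.natDegree_dvd_iff_dvd_X_pow_card_pow_sub_X.mp dvd_rfl
  rw [X_pow_sub_X_eq_X_mul (pow_pos Nat.card_pos _)] at hfrob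
  exact (hi.prime.dvd_or_dvd hfrob).resolve_left hX

theorem Irreducible.natDegree_dvd_of_dvd_X_pow_sub_one (hi : Irreducible h) (hn : h ∣ X ^ n - 1)
    {D : ℕ} (hD : n ∣ Nat.card K ^ D - 1) : h.natDegree ∣ D := by
  refine hi.natDegree_dvd_of_dvd_X_pow_card_pow_sub_X (hn.trans ?_)
  rw [X_pow_sub_X_eq_X_mul (pow_pos Nat.card_pos _)]
  exact dvd_mul_of_dvd_right (dvd_pow_sub_one_of_dvd hD) X

theorem natDegree_le_of_dvd_X_pow_sub_one_of_gcd_dvd {g : K[X]} {D : ℕ} (hn : (n : K) ≠ 0)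
    (hg : g ∣ X ^ n - 1) (hD : 0 < D)
    (hgcd : ∀ d, 0 < d → d ≤ g.natDegree → n.gcd (Nat.card K ^ d - 1) ∣ D) :
    g.natDegree ≤ D := by
  have hn0 : n ≠ 0 := by rintro rfl; simp at hn
  have hsqf : Squarefree g := by
    refine Squarefree.squarefree_of_dvd hg (Separable.squarefree ?_)
    simpa using separable_X_pow_sub_C (1 : K) hn one_ne_zero
  have hgD : g ∣ X ^ D - 1 := hsqf.dvd_of_forall_irreducible_dvd fun h hi hhg => by
    have hhn := hhg.trans hg
    have hdeg := natDegree_le_of_dvd hhg hsqf.ne_zero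
    exact (dvd_pow_gcd_sub_one hhn (hi.dvd_X_pow_card_pow_natDegree_sub_one hn0 hhn)).trans
      (dvd_pow_sub_one_of_dvd (hgcd _ hi.natDegree_pos hdeg))
  have hD0 : (X ^ D - C 1 : K[X]) ≠ 0 := X_pow_sub_C_ne_zero hD 1
  rw [← C_1] at hgD
  exact natDegree_X_pow_sub_C (n := D) (r := (1 : K)) ▸ natDegree_le_of_dvd hgD hD0

end FiniteField

theorem exists_dvd_natDegree_eq_of_irreducible_natDegree_le {F : Type*} [Field F] {f : F[X]}
    (hf : f ≠ 0) (c : F) {B : ℕ} (hB : (X - C c) ^ B ∣ f)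
    (hdeg : ∀ h, Irreducible h → h ∣ f → h.natDegree ≤ B + 1) {m : ℕ}
    (hm : m ≤ f.natDegree) : ∃ g, g ∣ f ∧ g.natDegree = m := by
  obtain ⟨u, rfl⟩ := hB
  have hu : u ≠ 0 := right_ne_zero_of_mul hf
  have hXc : (X - C c) ^ B ≠ 0 := pow_ne_zero _ (X_sub_C_ne_zero c)
  set M := UniqueFactorizationMonoid.normalizedFactors u
  have hM0 : (0 : F[X]) ∉ M := UniqueFactorizationMonoid.zero_notMem_normalizedFactors u
  have hMu : Associated M.prod u := UniqueFactorizationMonoid.prod_normalizedFactors hu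
  have hMdeg : ∀ h ∈ M, h.natDegree ≤ B + 1 := fun h hh =>
    hdeg h (UniqueFactorizationMonoid.irreducible_of_normalized_factor h hh)
      ((UniqueFactorizationMonoid.dvd_of_mem_normalizedFactors hh).mul_left _)
  have hMsum : (M.map natDegree).sum = u.natDegree := by
    rw [← natDegree_multiset_prod _ hM0]
    exact natDegree_eq_of_degree_eq (degree_eq_degree_of_associated hMu)
  rw [natDegree_mul hXc hu, natDegree_pow, natDegree_X_sub_C, mul_one, ← hMsum] at hm
  obtain ⟨t, htM, a, haB, rfl⟩ := M.exists_le_add_sum_map_eq natDegree hMdeg hm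
  refine ⟨(X - C c) ^ a * t.prod, mul_dvd_mul (pow_dvd_pow _ haB) ?_, ?_⟩
  · exact (Multiset.prod_dvd_prod_of_le htM).trans hMu.dvd
  · have ht0 : (0 : F[X]) ∉ t := fun h0 => hM0 (Multiset.mem_of_le htM h0)
    rw [natDegree_mul (pow_ne_zero _ (X_sub_C_ne_zero c)) (Multiset.prod_ne_zero ht0),
      natDegree_pow, natDegree_X_sub_C, mul_one, natDegree_multiset_prod _ ht0]

theorem natDegree_X_pow_sub_one {R : Type*} [CommRing R] [Nontrivial R] (n : ℕ) :
    (X ^ n - 1 : R[X]).natDegree = n := by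
  rw [← C_1, natDegree_X_pow_sub_C]

theorem pPractical_prime_pow {p : ℕ} (hp : p.Prime) (k : ℕ) : PPractical p (p ^ k) := by
  have := Fact.mk hp
  intro m _ hm
  refine ⟨(X - C 1) ^ m, ?_, by rw [natDegree_pow, natDegree_X_sub_C, mul_one]⟩
  have hfrob : (X - C 1 : (ZMod p)[X]) ^ p ^ k = X ^ p ^ k - 1 := by
    rw [sub_pow_char_pow, ← map_pow, one_pow, C_1]
  exact hfrob ▸ pow_dvd_pow _ hm

theorem pPractical_two_pow_mul {k q r : ℕ} (hr : 0 < r) (hq : q ∣ mersenne r)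
    (hrk : r ≤ 2 ^ k + 1) : PPractical 2 (2 ^ k * q) := by
  have : Fact (Nat.Prime 2) := ⟨Nat.prime_two⟩
  intro m _ hm
  have hfrob : (X ^ (2 ^ k * q) - 1 : (ZMod 2)[X]) = (X ^ q - 1) ^ 2 ^ k := by
    rw [sub_pow_char_pow, one_pow, ← pow_mul, mul_comm]
  have hq0 : 0 < q := Nat.pos_of_dvd_of_pos hq (mersenne_pos.mpr hr)
  have hf0 : (X ^ (2 ^ k * q) - 1 : (ZMod 2)[X]) ≠ 0 := by
    rw [← C_1]; exact X_pow_sub_C_ne_zero (Nat.mul_pos (Nat.two_pow_pos k) hq0) 1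
  refine exists_dvd_natDegree_eq_of_irreducible_natDegree_le hf0 1 (B := 2 ^ k) ?_ ?_
    (by rwa [natDegree_X_pow_sub_one])
  · rw [hfrob, C_1]
    exact pow_dvd_pow_of_dvd (sub_one_dvd_pow_sub_one X q) _
  · intro h hi hh
    rw [hfrob] at hh
    have hdvd := hi.natDegree_dvd_of_dvd_X_pow_sub_one (hi.prime.dvd_of_dvd_pow hh)
      (D := r) (by rw [Nat.card_zmod]; exact hq)
    exact (Nat.le_of_dvd hr hdvd).trans hrk

theorem not_pPractical_of_gcd_dvd {ℓ n m D : ℕ} (hℓ : ℓ.Prime) (hn : ¬ ℓ ∣ n) (hD : 0 < D)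
    (hDm : D < m) (hmn : m ≤ n) (hgcd : ∀ d, 0 < d → d ≤ m → n.gcd (ℓ ^ d - 1) ∣ D) :
    ¬ PPractical ℓ n := by
  have := Fact.mk hℓ
  intro hP
  obtain ⟨g, hg, rfl⟩ := hP m (by omega) hmn
  have := natDegree_le_of_dvd_X_pow_sub_one_of_gcd_dvd (K := ZMod ℓ)
    (by rwa [Ne, ZMod.natCast_eq_zero_iff]) hg hD (by rwa [Nat.card_zmod])
  omega

theorem not_lambdaPractical_prime_pow {p k : ℕ} (hp : p.Prime) (hp2 : p ≠ 2) (hk : 2 ≤ k) :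
    ¬ LambdaPractical (p ^ k) := by
  intro hL
  have h2 : ¬ 2 ∣ p ^ k := fun h =>
    hp2 ((Nat.prime_dvd_prime_iff_eq Nat.prime_two hp).mp (Nat.prime_two.dvd_of_dvd_pow h)).symm
  have hpk : p ^ 2 ≤ p ^ k := Nat.pow_le_pow_right hp.pos hk
  obtain rfl | hp3 := eq_or_ne p 3
  · refine not_pPractical_of_gcd_dvd Nat.prime_two h2 (D := 3) (m := 4) (by norm_num)
      (by norm_num) (by omega) ?_ (hL 2 Nat.prime_two)
    intro d hd0 hd4
    interval_cases d
    · simp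
    · exact Nat.gcd_dvd_right _ _
    · simp [Nat.Coprime.pow_left k (by norm_num : Nat.Coprime 3 7)]
    · rw [show 2 ^ 4 - 1 = 3 * 5 by norm_num, Nat.Coprime.gcd_mul _ (by norm_num),
        Nat.Coprime.pow_left k (by norm_num : Nat.Coprime 3 5), mul_one]
      exact Nat.gcd_dvd_right _ _
  · have hp3' : Nat.Coprime (p ^ k) 3 :=
      Nat.Coprime.pow_left k ((Nat.coprime_primes hp Nat.prime_three).mpr hp3)
    refine not_pPractical_of_gcd_dvd Nat.prime_two h2 (D := 1) (m := 2) one_pos one_lt_two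
      (by nlinarith [hp.two_le]) ?_ (hL 2 Nat.prime_two)
    intro d hd0 hd2
    interval_cases d
    · simp
    · simp [hp3']

theorem two_mul_dvd_sub_one_of_dvd_mersenne {q r : ℕ} (hq : q.Prime) (hr : r.Prime) (hr2 : r ≠ 2)
    (h : q ∣ mersenne r) : 2 * r ∣ q - 1 := by
  have := Fact.mk hq
  have := Fact.mk hr
  have hq2 : q ≠ 2 := by
    rintro rfl
    exact (Nat.not_even_iff_odd.mpr (mersenne_odd.mpr hr.ne_zero)) (even_iff_two_dvd.mpr h)
  have h2r : (2 : ZMod q) ^ r = 1 := by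
    rw [← ZMod.natCast_eq_zero_iff, mersenne, Nat.cast_sub Nat.one_le_two_pow] at h
    simpa [sub_eq_zero] using h
  have h21 : (2 : ZMod q) ≠ 1 := fun h21 => one_ne_zero (by linear_combination h21)
  have hrq : r ∣ q - 1 := orderOf_eq_prime h2r h21 ▸ ZMod.orderOf_dvd_card_sub_one
    (fun h0 => by simp [h0, hr.ne_zero] at h2r)
  have h2q : 2 ∣ q - 1 := by
    obtain ⟨c, hc⟩ := hq.odd_of_ne_two hq2
    omega
  exact Nat.Coprime.mul_dvd_of_dvd_of_dvd ((Nat.coprime_primes Nat.prime_two hr).mpr hr2.symm)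
    h2q hrq

theorem not_lambdaPractical_two_pow_mul {k q : ℕ} (hq : q.Prime) (hkq : 2 ^ k + 2 < q) :
    ¬ LambdaPractical (2 ^ k * q) := by
  have := Fact.mk hq
  obtain ⟨z, hz⟩ := IsCyclic.exists_ofOrder_eq_natCard (α := (ZMod q)ˣ)
  obtain ⟨ℓ, hℓq, hℓ, hℓz⟩ := Nat.forall_exists_prime_gt_and_eq_mod z.isUnit q
  have hord : orderOf (ℓ : ZMod q) = q - 1 := by
    rw [hℓz, orderOf_units, hz, Nat.card_eq_fintype_card, ZMod.card_units]
  have hℓn : ¬ ℓ ∣ 2 ^ k * q := by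
    intro h
    rcases (Nat.Prime.dvd_mul hℓ).mp h with h2 | hq'
    · have := Nat.le_of_dvd two_pos (hℓ.dvd_of_dvd_pow h2)
      have := Nat.one_le_two_pow (n := k)
      omega
    · have := Nat.le_of_dvd hq.pos hq'
      omega
  have hgcd : ∀ d, 0 < d → d ≤ 2 ^ k + 1 → (2 ^ k * q).gcd (ℓ ^ d - 1) ∣ 2 ^ k := by
    intro d hd0 hdk
    have hqd : ¬ q ∣ ℓ ^ d - 1 := by
      rw [← ZMod.natCast_eq_zero_iff, Nat.cast_sub (Nat.one_le_pow _ _ hℓ.pos), sub_eq_zero,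
        Nat.cast_pow, Nat.cast_one]
      intro h
      have := Nat.le_of_dvd hd0 (hord ▸ orderOf_dvd_of_pow_eq_one h)
      omega
    have hcop : Nat.Coprime q ((2 ^ k * q).gcd (ℓ ^ d - 1)) :=
      hq.coprime_iff_not_dvd.mpr fun h => hqd (h.trans (Nat.gcd_dvd_right _ _))
    exact hcop.symm.dvd_of_dvd_mul_right (Nat.gcd_dvd_left _ _)
  exact fun hL => not_pPractical_of_gcd_dvd hℓ hℓn (Nat.two_pow_pos k) (Nat.lt_succ_self _)
    (by nlinarith [Nat.one_le_two_pow (n := k)]) hgcd (hL ℓ hℓ)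

theorem exists_gt_pPractical_two_not_lambdaPractical (N : ℕ) :
    ∃ n, N < n ∧ 0 < n ∧ PPractical 2 n ∧ ¬ LambdaPractical n := by
  obtain ⟨r, hNr, hr⟩ := Nat.exists_infinite_primes (N + 3)
  have hmersenne : mersenne r ≠ 1 := (one_lt_mersenne.mpr (by omega)).ne'
  set q := (mersenne r).minFac
  have hq : q.Prime := Nat.minFac_prime hmersenne
  have hrq := Nat.le_of_dvd (Nat.sub_pos_of_lt hq.one_lt)
    (two_mul_dvd_sub_one_of_dvd_mersenne hq hr (by omega) (Nat.minFac_dvd _))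
  set k := Nat.log 2 (r - 1) + 1
  have hrk : r - 1 < 2 ^ k := Nat.lt_pow_succ_log_self one_lt_two _
  have hkr : 2 ^ k ≤ 2 * (r - 1) := by
    rw [pow_succ, mul_comm]
    exact Nat.mul_le_mul_left 2 (Nat.pow_log_le_self 2 (by omega))
  refine ⟨2 ^ k * q, ?_, Nat.mul_pos (Nat.two_pow_pos k) hq.pos,
    pPractical_two_pow_mul hr.pos (Nat.minFac_dvd _) (by omega),
    not_lambdaPractical_two_pow_mul hq (by omega)⟩
  exact (show N < q by omega).trans_le (Nat.le_mul_of_pos_left q (Nat.two_pow_pos k))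

theorem stmt17 (p : ℕ) (hp : p.Prime) :
    {n : ℕ | 0 < n ∧ PPractical p n ∧ ¬ LambdaPractical n}.Infinite := by
  refine Set.infinite_of_forall_exists_gt fun N => ?_
  obtain rfl | hp2 := eq_or_ne p 2
  · obtain ⟨n, hNn, hn⟩ := exists_gt_pPractical_two_not_lambdaPractical N
    exact ⟨n, hn, hNn⟩
  · refine ⟨p ^ (N + 2), ⟨pow_pos hp.pos _, pPractical_prime_pow hp _,
      not_lambdaPractical_prime_pow hp hp2 (by omega)⟩, ?_⟩
    calc N < 2 ^ (N + 2) := Nat.lt_two_pow_self.trans (Nat.pow_lt_pow_right one_lt_two (by omega))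
      _ ≤ p ^ (N + 2) := Nat.pow_le_pow_left hp.two_le _
end
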